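/- arXiv:1912.12505 — 9 statements merged into one kernel-verified Lean document; each statement's English description precedes it below -/
import Mathlib

section
/- For 0 < λ < 1, equality λ·H_{P1}(A|B) + (1−λ)·H_{P2}(A|B) = H_{λP1+(1−λ)P2}(A|B) holds if and only if the conditional distributions agree: P1(a|b) = P2(a|b) for all (a,b) with (λP1+(1−λ)P2)(b) > 0. -/
open scoped BigOperators
noncomputable section

/-- A joint probability distribution of two random variables `A`, `B` with finite state
spaces, given as a function `A → B → ℝ`. -/
def IsJointDist {A B : Type*} [Fintype A] [Fintype B] (P : A → B → ℝ) : Prop :=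
  (∀ a b, 0 ≤ P a b) ∧ ∑ a, ∑ b, P a b = 1

/-- The conditional entropy `H_P(A|B) = -∑_{a,b} P(a,b) log (P(a,b)/P(b))`. -/
def condEnt {A B : Type*} [Fintype A] [Fintype B] (P : A → B → ℝ) : ℝ :=
  ∑ b, ∑ a, -(P a b * Real.log (P a b / ∑ a', P a' b))

/-! The map `(x, s) ↦ x log (x / s)` is the perspective of the strictly convex function
`x ↦ x log x`. Hence it is jointly convex, with equality in the two-point Jensen inequality exactly
when `x₁ / s₁ = x₂ / s₂` (the two-term log-sum inequality). Applied to each summand of the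
mixture's conditional entropy, with `x = P(a,b)` and `s = P(b)`, this gives the concavity
inequality termwise; so equality of the sums forces equality of every term, i.e.
`P₁(a,b) P₂(b) = P₂(a,b) P₁(b)` for all `a, b`. -/

open Real

-- `x ≤ s` rather than `0 < s`: it allows `s = 0`, forcing `x = 0`, so the junk `x / 0 = 0` is harmless.
theorem mul_log_div_add_lt {x y s t : ℝ} (hx : 0 ≤ x) (hy : 0 ≤ y) (hxs : x ≤ s) (hyt : y ≤ t)
    (hne : x * t ≠ y * s) :
    (x + y) * log ((x + y) / (s + t)) < x * log (x / s) + y * log (y / t) := by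
  have hs : 0 < s := (hx.trans hxs).lt_of_ne fun hs => hne <| by
    rw [← hs, le_antisymm (hs ▸ hxs) hx]; ring
  have ht : 0 < t := (hy.trans hyt).lt_of_ne fun ht => hne <| by
    rw [← ht, le_antisymm (ht ▸ hyt) hy]; ring
  have hst : 0 < s + t := by positivity
  have hdiff : x / s ≠ y / t := fun h => hne ((div_eq_div_iff hs.ne' ht.ne').1 h)
  have key := strictConvexOn_mul_log.2 (Set.mem_Ici.2 (div_nonneg hx hs.le))
    (Set.mem_Ici.2 (div_nonneg hy ht.le)) hdiff (div_pos hs hst) (div_pos ht hst)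
    (by field_simp)
  have hmix : s / (s + t) * (x / s) + t / (s + t) * (y / t) = (x + y) / (s + t) := by
    field_simp
  simp only [smul_eq_mul, hmix] at key
  calc (x + y) * log ((x + y) / (s + t))
      = (s + t) * ((x + y) / (s + t) * log ((x + y) / (s + t))) := by field_simp
    _ < (s + t) * (s / (s + t) * (x / s * log (x / s)) + t / (s + t) * (y / t * log (y / t))) := by
      gcongr
    _ = x * log (x / s) + y * log (y / t) := by field_simp

theorem mul_log_div_add_eq_of_mul_eq {x y s t : ℝ} (hx : 0 ≤ x) (hy : 0 ≤ y) (hxs : x ≤ s)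
    (hyt : y ≤ t) (h : x * t = y * s) :
    (x + y) * log ((x + y) / (s + t)) = x * log (x / s) + y * log (y / t) := by
  rcases (hx.trans hxs).eq_or_lt with rfl | hs
  · obtain rfl : x = 0 := le_antisymm hxs hx
    simp
  rcases (hy.trans hyt).eq_or_lt with rfl | ht
  · obtain rfl : y = 0 := le_antisymm hyt hy
    simp
  have hxy : x / s = y / t := (div_eq_div_iff hs.ne' ht.ne').2 h
  have hsum : (x + y) / (s + t) = x / s := by
    rw [div_eq_div_iff (by positivity) hs.ne']; linear_combination -h
  rw [hsum, ← hxy]; ring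

theorem mul_log_div_add_le {x y s t : ℝ} (hx : 0 ≤ x) (hy : 0 ≤ y) (hxs : x ≤ s) (hyt : y ≤ t) :
    (x + y) * log ((x + y) / (s + t)) ≤ x * log (x / s) + y * log (y / t) := by
  by_cases h : x * t = y * s
  · exact (mul_log_div_add_eq_of_mul_eq hx hy hxs hyt h).le
  · exact (mul_log_div_add_lt hx hy hxs hyt h).le

theorem mul_log_div_add_eq_iff {x y s t : ℝ} (hx : 0 ≤ x) (hy : 0 ≤ y) (hxs : x ≤ s)
    (hyt : y ≤ t) :
    (x + y) * log ((x + y) / (s + t)) = x * log (x / s) + y * log (y / t) ↔ x * t = y * s :=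
  ⟨fun heq => by_contra fun h => (mul_log_div_add_lt hx hy hxs hyt h).ne heq,
    mul_log_div_add_eq_of_mul_eq hx hy hxs hyt⟩

theorem Finset.sum_sum_eq_sum_sum_iff_of_le {ι κ M : Type*} [Fintype ι] [Fintype κ]
    [AddCommMonoid M] [PartialOrder M] [IsOrderedCancelAddMonoid M] {f g : ι → κ → M}
    (h : ∀ i k, f i k ≤ g i k) :
    ∑ k, ∑ i, f i k = ∑ k, ∑ i, g i k ↔ ∀ i k, f i k = g i k := by
  rw [Finset.sum_eq_sum_iff_of_le fun k _ => Finset.sum_le_sum fun i _ => h i k]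
  simp only [Finset.mem_univ, forall_const, Finset.sum_eq_sum_iff_of_le fun i _ => h i _]
  exact forall_comm

theorem mul_eq_mul_iff_imp_div_eq_div {x y s t : ℝ} (hx : 0 ≤ x) (hy : 0 ≤ y) (hxs : x ≤ s)
    (hyt : y ≤ t) : x * t = y * s ↔ (0 < s → 0 < t → x / s = y / t) := by
  refine ⟨fun h hs ht => (div_eq_div_iff hs.ne' ht.ne').2 h, fun h => ?_⟩
  rcases (hx.trans hxs).eq_or_lt with rfl | hs
  · simp [le_antisymm hxs hx]
  rcases (hy.trans hyt).eq_or_lt with rfl | ht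
  · simp [le_antisymm hyt hy]
  exact (div_eq_div_iff hs.ne' ht.ne').1 (h hs ht)

theorem mul_log_div_mix_le {l x₁ x₂ s₁ s₂ : ℝ} (hl0 : 0 < l) (hl1 : l < 1) (hx₁ : 0 ≤ x₁)
    (hx₂ : 0 ≤ x₂) (h₁ : x₁ ≤ s₁) (h₂ : x₂ ≤ s₂) :
    (l * x₁ + (1 - l) * x₂) * log ((l * x₁ + (1 - l) * x₂) / (l * s₁ + (1 - l) * s₂)) ≤
      l * (x₁ * log (x₁ / s₁)) + (1 - l) * (x₂ * log (x₂ / s₂)) := by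
  have hl1' : 0 < 1 - l := sub_pos.2 hl1
  have h := mul_log_div_add_le (mul_nonneg hl0.le hx₁) (mul_nonneg hl1'.le hx₂)
    (mul_le_mul_of_nonneg_left h₁ hl0.le) (mul_le_mul_of_nonneg_left h₂ hl1'.le)
  rwa [mul_div_mul_left _ _ hl0.ne', mul_div_mul_left _ _ hl1'.ne', mul_assoc, mul_assoc] at h

theorem mul_log_div_mix_eq_iff {l x₁ x₂ s₁ s₂ : ℝ} (hl0 : 0 < l) (hl1 : l < 1) (hx₁ : 0 ≤ x₁)
    (hx₂ : 0 ≤ x₂) (h₁ : x₁ ≤ s₁) (h₂ : x₂ ≤ s₂) :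
    (l * x₁ + (1 - l) * x₂) * log ((l * x₁ + (1 - l) * x₂) / (l * s₁ + (1 - l) * s₂)) =
      l * (x₁ * log (x₁ / s₁)) + (1 - l) * (x₂ * log (x₂ / s₂)) ↔ x₁ * s₂ = x₂ * s₁ := by
  have hl1' : 0 < 1 - l := sub_pos.2 hl1
  have h := mul_log_div_add_eq_iff (mul_nonneg hl0.le hx₁) (mul_nonneg hl1'.le hx₂)
    (mul_le_mul_of_nonneg_left h₁ hl0.le) (mul_le_mul_of_nonneg_left h₂ hl1'.le)
  rw [mul_div_mul_left _ _ hl0.ne', mul_div_mul_left _ _ hl1'.ne', mul_assoc, mul_assoc] at h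
  rw [h, mul_mul_mul_comm, mul_mul_mul_comm _ _ l, mul_comm l]
  exact mul_right_inj' (mul_pos hl1' hl0).ne'

section

variable {A B : Type*} [Fintype A] [Fintype B]

theorem condEnt_convexComb_eq_sum (P₁ P₂ : A → B → ℝ) (l : ℝ) :
    condEnt (fun a b => l * P₁ a b + (1 - l) * P₂ a b) =
      ∑ b, ∑ a, -((l * P₁ a b + (1 - l) * P₂ a b) *
        log ((l * P₁ a b + (1 - l) * P₂ a b) / (l * ∑ a', P₁ a' b + (1 - l) * ∑ a', P₂ a' b))) := by
  simp only [condEnt, Finset.sum_add_distrib, ← Finset.mul_sum]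

theorem convexComb_condEnt_eq_sum (P₁ P₂ : A → B → ℝ) (l : ℝ) :
    l * condEnt P₁ + (1 - l) * condEnt P₂ =
      ∑ b, ∑ a, -(l * (P₁ a b * log (P₁ a b / ∑ a', P₁ a' b)) +
        (1 - l) * (P₂ a b * log (P₂ a b / ∑ a', P₂ a' b))) := by
  simp only [condEnt, Finset.mul_sum, ← Finset.sum_add_distrib, mul_neg, neg_add]

end

/-- For `0 < λ < 1`, equality in the concavity inequality for conditional entropy
holds if and only if the conditional distributions agree:
`P1(a|b) = P2(a|b)` for all `(a,b)` such that the `B`-marginal of the mixture is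
positive (the conditional `Pi(a|b) = Pi(a,b)/Pi(b)` being defined when `Pi(b) > 0`). -/
theorem condEnt_strictly_concave_iff {A B : Type*} [Fintype A] [Fintype B]
    (P1 P2 : A → B → ℝ) (hP1 : IsJointDist P1) (hP2 : IsJointDist P2)
    (l : ℝ) (hl0 : 0 < l) (hl1 : l < 1) :
    l * condEnt P1 + (1 - l) * condEnt P2 =
        condEnt (fun a b => l * P1 a b + (1 - l) * P2 a b) ↔
      ∀ a b, (0 < ∑ a', (l * P1 a' b + (1 - l) * P2 a' b)) →
        (0 < ∑ a', P1 a' b) → (0 < ∑ a', P2 a' b) →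
        P1 a b / (∑ a', P1 a' b) = P2 a b / (∑ a', P2 a' b) := by
  have hle₁ a b : P1 a b ≤ ∑ a', P1 a' b :=
    Finset.single_le_sum (fun i _ => hP1.1 i b) (Finset.mem_univ a)
  have hle₂ a b : P2 a b ≤ ∑ a', P2 a' b :=
    Finset.single_le_sum (fun i _ => hP2.1 i b) (Finset.mem_univ a)
  rw [convexComb_condEnt_eq_sum, condEnt_convexComb_eq_sum,
    Finset.sum_sum_eq_sum_sum_iff_of_le fun a b =>
      neg_le_neg (mul_log_div_mix_le hl0 hl1 (hP1.1 a b) (hP2.1 a b) (hle₁ a b) (hle₂ a b))]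
  refine forall₂_congr fun a b => ?_
  rw [neg_inj, eq_comm,
    mul_log_div_mix_eq_iff hl0 hl1 (hP1.1 a b) (hP2.1 a b) (hle₁ a b) (hle₂ a b),
    mul_eq_mul_iff_imp_div_eq_div (hP1.1 a b) (hP2.1 a b) (hle₁ a b) (hle₂ a b)]
  refine ⟨fun h _ => h, fun h hs₁ hs₂ => h ?_ hs₁ hs₂⟩
  rw [Finset.sum_add_distrib, ← Finset.mul_sum, ← Finset.mul_sum]
  have hl1' : 0 < 1 - l := sub_pos.2 hl1
  positivity
end
end

section
/- If Q1 and Q2 are both maximizers of H_Q(T|X,Y) over the convex polytope Δ_P, then Q1(t|x,y) = Q2(t|x,y) for all (t,x,y) such that both Q1(x,y) > 0 and Q2(x,y) > 0. -/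
open scoped BigOperators
noncomputable section

variable {T X Y : Type*}

/-- A joint probability distribution of `(T,X,Y)`, as a function `T → X → Y → ℝ`. -/
def IsDist [Fintype T] [Fintype X] [Fintype Y] (P : T → X → Y → ℝ) : Prop :=
  (∀ t x y, 0 ≤ P t x y) ∧ ∑ t, ∑ x, ∑ y, P t x y = 1

/-- The `(T,X)`-marginal. -/
def margTX [Fintype Y] (P : T → X → Y → ℝ) (t : T) (x : X) : ℝ := ∑ y, P t x y

/-- The `(T,Y)`-marginal. -/
def margTY [Fintype X] (P : T → X → Y → ℝ) (t : T) (y : Y) : ℝ := ∑ x, P t x y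

/-- The `(X,Y)`-marginal. -/
def margXY [Fintype T] (P : T → X → Y → ℝ) (x : X) (y : Y) : ℝ := ∑ t, P t x y

/-- The `T`-marginal. -/
def margT [Fintype X] [Fintype Y] (P : T → X → Y → ℝ) (t : T) : ℝ := ∑ x, ∑ y, P t x y

/-- The `Y`-marginal. -/
def margY [Fintype T] [Fintype X] (P : T → X → Y → ℝ) (y : Y) : ℝ := ∑ t, ∑ x, P t x y

/-- `Δ_P`: the polytope of joint distributions with the same `(T,X)`- and
`(T,Y)`-marginals as `P`. -/
def deltaP [Fintype T] [Fintype X] [Fintype Y] (P : T → X → Y → ℝ) :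
    Set (T → X → Y → ℝ) :=
  {Q | IsDist Q ∧ (∀ t x, margTX Q t x = margTX P t x) ∧
    (∀ t y, margTY Q t y = margTY P t y)}

/-- The conditional entropy `H_Q(T|X,Y)` (with the convention `0 log 0 = 0`,
automatic since `Real.log 0 = 0`). -/
def condEntTXY [Fintype T] [Fintype X] [Fintype Y] (Q : T → X → Y → ℝ) : ℝ :=
  ∑ t, ∑ x, ∑ y, -(Q t x y * Real.log (Q t x y / margXY Q x y))

/-- The conditional mutual information `I_Q(T:X|Y)`. -/
def CMI [Fintype T] [Fintype X] [Fintype Y] (Q : T → X → Y → ℝ) : ℝ :=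
  ∑ t, ∑ x, ∑ y,
    Q t x y * Real.log (Q t x y * margY Q y / (margTY Q t y * margXY Q x y))

/-!
`Δ_P` is convex, and `H_Q(T|X,Y)` is positively homogeneous and superadditive in `Q`: each of its
terms `-q log (q / m)`, with `m` the `(X,Y)`-marginal, is the perspective of the strictly concave
`u ↦ -u log u`, and superadditivity is the log-sum inequality. If `Q1` and `Q2` both maximize `H`,
so does their midpoint, which makes superadditivity tight at `(Q1, Q2)`; by strict concavity every
term is then tight, i.e. `q1 / m1 = q2 / m2` wherever both marginals are positive.
-/

open Real Finset

section MulLogDiv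

variable {a b c d : ℝ}

lemma mul_log_div_eq_mul_mul_log (a : ℝ) (hc : 0 < c) :
    a * log (a / c) = c * (a / c * log (a / c)) := by
  field_simp

lemma add_mul_log_div_add_eq (hc : 0 < c) (hd : 0 < d) :
    (a + b) * log ((a + b) / (c + d)) =
      (c + d) * ((c / (c + d) * (a / c) + d / (c + d) * (b / d)) *
        log (c / (c + d) * (a / c) + d / (c + d) * (b / d))) := by
  have hcomb : c / (c + d) * (a / c) + d / (c + d) * (b / d) = (a + b) / (c + d) := by
    field_simp
  rw [hcomb, ← mul_log_div_eq_mul_mul_log _ (by positivity)]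

lemma mul_log_div_add_mul_log_div_eq (hc : 0 < c) (hd : 0 < d) :
    a * log (a / c) + b * log (b / d) =
      (c + d) * (c / (c + d) * (a / c * log (a / c)) + d / (c + d) * (b / d * log (b / d))) := by
  rw [mul_log_div_eq_mul_mul_log a hc, mul_log_div_eq_mul_mul_log b hd]
  field_simp

lemma add_mul_log_div_add_le_of_pos (ha : 0 ≤ a) (hb : 0 ≤ b) (hc : 0 < c) (hd : 0 < d) :
    (a + b) * log ((a + b) / (c + d)) ≤ a * log (a / c) + b * log (b / d) := by
  rw [add_mul_log_div_add_eq hc hd, mul_log_div_add_mul_log_div_eq hc hd]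
  have hjensen := convexOn_mul_log.2 (Set.mem_Ici.2 (div_nonneg ha hc.le))
    (Set.mem_Ici.2 (div_nonneg hb hd.le)) (by positivity : 0 ≤ c / (c + d))
    (by positivity : 0 ≤ d / (c + d)) (by field_simp)
  simp only [smul_eq_mul] at hjensen
  gcongr

lemma add_mul_log_div_add_le (ha : 0 ≤ a) (hb : 0 ≤ b) (hac : a ≤ c) (hbd : b ≤ d) :
    (a + b) * log ((a + b) / (c + d)) ≤ a * log (a / c) + b * log (b / d) := by
  rcases (ha.trans hac).eq_or_lt with rfl | hc
  · obtain rfl : a = 0 := le_antisymm hac ha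
    simp
  rcases (hb.trans hbd).eq_or_lt with rfl | hd
  · obtain rfl : b = 0 := le_antisymm hbd hb
    simp
  exact add_mul_log_div_add_le_of_pos ha hb hc hd

lemma div_eq_div_of_mul_log_div_add_mul_log_div_le (ha : 0 ≤ a) (hb : 0 ≤ b) (hc : 0 < c)
    (hd : 0 < d) (h : a * log (a / c) + b * log (b / d) ≤ (a + b) * log ((a + b) / (c + d))) :
    a / c = b / d := by
  by_contra hne
  rw [add_mul_log_div_add_eq hc hd, mul_log_div_add_mul_log_div_eq hc hd] at h
  have hjensen := strictConvexOn_mul_log.2 (Set.mem_Ici.2 (div_nonneg ha hc.le))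
    (Set.mem_Ici.2 (div_nonneg hb hd.le)) hne (by positivity : 0 < c / (c + d))
    (by positivity : 0 < d / (c + d)) (by field_simp)
  simp only [smul_eq_mul] at hjensen
  exact h.not_gt (mul_lt_mul_of_pos_left hjensen (by positivity))

end MulLogDiv

section Distributions

variable [Fintype T]

lemma margXY_add (Q1 Q2 : T → X → Y → ℝ) (x : X) (y : Y) :
    margXY (Q1 + Q2) x y = margXY Q1 x y + margXY Q2 x y :=
  sum_add_distrib

lemma le_margXY {Q : T → X → Y → ℝ} (hQ : ∀ t x y, 0 ≤ Q t x y) (t : T) (x : X) (y : Y) :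
    Q t x y ≤ margXY Q x y :=
  single_le_sum (fun t' _ => hQ t' x y) (mem_univ t)

lemma condEntTXY_term_add_le {Q1 Q2 : T → X → Y → ℝ} (hQ1 : ∀ t x y, 0 ≤ Q1 t x y)
    (hQ2 : ∀ t x y, 0 ≤ Q2 t x y) (t : T) (x : X) (y : Y) :
    -(Q1 t x y * log (Q1 t x y / margXY Q1 x y)) + -(Q2 t x y * log (Q2 t x y / margXY Q2 x y)) ≤
      -((Q1 + Q2) t x y * log ((Q1 + Q2) t x y / margXY (Q1 + Q2) x y)) := by
  simp only [margXY_add, Pi.add_apply]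
  linarith [add_mul_log_div_add_le (hQ1 t x y) (hQ2 t x y) (le_margXY hQ1 t x y)
    (le_margXY hQ2 t x y)]

variable [Fintype X] [Fintype Y]

lemma sum_sum_sum_lt_sum_sum_sum {M : Type*} [AddCommMonoid M] [PartialOrder M]
    [IsOrderedCancelAddMonoid M] {f g : T → X → Y → M} (hle : ∀ t x y, f t x y ≤ g t x y)
    (t : T) (x : X) (y : Y) (hlt : f t x y < g t x y) :
    ∑ t, ∑ x, ∑ y, f t x y < ∑ t, ∑ x, ∑ y, g t x y :=
  sum_lt_sum (fun t _ => sum_le_sum fun x _ => sum_le_sum fun y _ => hle t x y)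
    ⟨t, mem_univ _, sum_lt_sum (fun x _ => sum_le_sum fun y _ => hle t x y)
      ⟨x, mem_univ _, sum_lt_sum (fun y _ => hle t x y) ⟨y, mem_univ _, hlt⟩⟩⟩

lemma convex_deltaP (P : T → X → Y → ℝ) : Convex ℝ (deltaP P) := by
  rintro Q1 ⟨⟨h1nn, h1sum⟩, h1TX, h1TY⟩ Q2 ⟨⟨h2nn, h2sum⟩, h2TX, h2TY⟩ a b ha hb hab
  refine ⟨⟨fun t x y => ?_, ?_⟩, fun t x => ?_, fun t y => ?_⟩
  · exact add_nonneg (mul_nonneg ha (h1nn t x y)) (mul_nonneg hb (h2nn t x y))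
  · simp only [Pi.add_apply, Pi.smul_apply, smul_eq_mul, sum_add_distrib, ← mul_sum,
      h1sum, h2sum, hab, mul_one]
  · simp only [margTX, Pi.add_apply, Pi.smul_apply, smul_eq_mul, sum_add_distrib,
      ← mul_sum] at h1TX h2TX ⊢
    rw [h1TX, h2TX, ← add_mul, hab, one_mul]
  · simp only [margTY, Pi.add_apply, Pi.smul_apply, smul_eq_mul, sum_add_distrib,
      ← mul_sum] at h1TY h2TY ⊢
    rw [h1TY, h2TY, ← add_mul, hab, one_mul]

lemma condEntTXY_smul (c : ℝ) (Q : T → X → Y → ℝ) :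
    condEntTXY (c • Q) = c * condEntTXY Q := by
  rcases eq_or_ne c 0 with rfl | hc
  · simp [condEntTXY]
  have hmarg (x : X) (y : Y) : margXY (c • Q) x y = c * margXY Q x y := (mul_sum _ _ _).symm
  simp only [condEntTXY, hmarg, Pi.smul_apply, smul_eq_mul, mul_div_mul_left _ _ hc, mul_sum,
    mul_neg, mul_assoc]

lemma condEntTXY_add_condEntTXY_le {Q1 Q2 : T → X → Y → ℝ} (hQ1 : ∀ t x y, 0 ≤ Q1 t x y)
    (hQ2 : ∀ t x y, 0 ≤ Q2 t x y) :
    condEntTXY Q1 + condEntTXY Q2 ≤ condEntTXY (Q1 + Q2) := by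
  simp only [condEntTXY, ← sum_add_distrib]
  exact sum_le_sum fun t _ => sum_le_sum fun x _ => sum_le_sum fun y _ =>
    condEntTXY_term_add_le hQ1 hQ2 t x y

lemma div_margXY_eq_of_condEntTXY_add_le {Q1 Q2 : T → X → Y → ℝ} (hQ1 : ∀ t x y, 0 ≤ Q1 t x y)
    (hQ2 : ∀ t x y, 0 ≤ Q2 t x y) (h : condEntTXY (Q1 + Q2) ≤ condEntTXY Q1 + condEntTXY Q2)
    (t : T) (x : X) (y : Y) (h1 : 0 < margXY Q1 x y) (h2 : 0 < margXY Q2 x y) :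
    Q1 t x y / margXY Q1 x y = Q2 t x y / margXY Q2 x y := by
  by_contra hne
  refine h.not_gt ?_
  simp only [condEntTXY, ← sum_add_distrib]
  refine sum_sum_sum_lt_sum_sum_sum (condEntTXY_term_add_le hQ1 hQ2) t x y ?_
  have hstrict :=
    mt (div_eq_div_of_mul_log_div_add_mul_log_div_le (hQ1 t x y) (hQ2 t x y) h1 h2) hne
  simp only [margXY_add, Pi.add_apply]
  linarith

end Distributions

theorem maximizers_same_conditional_general [Fintype T] [Fintype X] [Fintype Y]
    (P Q1 Q2 : T → X → Y → ℝ)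
    (hQ1 : Q1 ∈ deltaP P) (hQ2 : Q2 ∈ deltaP P)
    (hmax1 : ∀ Q ∈ deltaP P, condEntTXY Q ≤ condEntTXY Q1)
    (hmax2 : ∀ Q ∈ deltaP P, condEntTXY Q ≤ condEntTXY Q2) :
    ∀ t x y, 0 < margXY Q1 x y → 0 < margXY Q2 x y →
      Q1 t x y / margXY Q1 x y = Q2 t x y / margXY Q2 x y := by
  have hmid : (1 / 2 : ℝ) • Q1 + (1 / 2 : ℝ) • Q2 ∈ deltaP P :=
    convex_deltaP P hQ1 hQ2 (by norm_num) (by norm_num) (by norm_num)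
  have hsum_le : condEntTXY (Q1 + Q2) ≤ condEntTXY Q1 + condEntTXY Q2 := by
    have hmid_le := hmax1 _ hmid
    rw [← smul_add, condEntTXY_smul] at hmid_le
    linarith [hmax2 Q1 hQ1]
  exact div_margXY_eq_of_condEntTXY_add_le hQ1.1.1 hQ2.1.1 hsum_le

/-- If `Q1` and `Q2` are both maximizers of `H_Q(T|X,Y)` over `Δ_P`, then their
conditional distributions agree: `Q1(t|x,y) = Q2(t|x,y)` wherever both `(X,Y)`-marginals
are positive. -/
theorem maximizers_same_conditional [Fintype T] [Fintype X] [Fintype Y]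
    (P Q1 Q2 : T → X → Y → ℝ) (hP : IsDist P)
    (hQ1 : Q1 ∈ deltaP P) (hQ2 : Q2 ∈ deltaP P)
    (hmax1 : ∀ Q ∈ deltaP P, condEntTXY Q ≤ condEntTXY Q1)
    (hmax2 : ∀ Q ∈ deltaP P, condEntTXY Q ≤ condEntTXY Q2) :
    ∀ t x y, 0 < margXY Q1 x y → 0 < margXY Q2 x y →
      Q1 t x y / margXY Q1 x y = Q2 t x y / margXY Q2 x y :=
  maximizers_same_conditional_general P Q1 Q2 hQ1 hQ2 hmax1 hmax2
end
end

section
/- The distribution Q0 defined by Q0(t,x,y) = P(t)·P(x|t)·P(y|t) is the unique element of Δ_P satisfying the conditional independence X ⊥ Y | T, and its support equals the maximal support supp(Δ_P) = ∪_{Q∈Δ_P} supp(Q). -/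
open scoped BigOperators
noncomputable section

variable {T X Y : Type*}

/-- `Q0(t,x,y) = P(t) P(x|t) P(y|t) = P(t,x) P(t,y) / P(t)` (equal to `0` when
`P(t) = 0`, by the junk value `0/0 = 0`). -/
def Q0 [Fintype X] [Fintype Y] (P : T → X → Y → ℝ) (t : T) (x : X) (y : Y) : ℝ :=
  margTX P t x * margTY P t y / margT P t

/-- Conditional independence `X ⊥ Y | T` under `Q`:
`Q(t,x,y) Q(t) = Q(t,x) Q(t,y)` for all `t,x,y`. -/
def CIXYgT [Fintype X] [Fintype Y] (Q : T → X → Y → ℝ) : Prop :=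
  ∀ t x y, Q t x y * margT Q t = margTX Q t x * margTY Q t y

lemma nested_zero [Fintype X] [Fintype Y] {f : X → Y → ℝ} (h : ∀ x y, 0 ≤ f x y)
    (h0 : ∑ x, ∑ y, f x y = 0) : ∀ x y, f x y = 0 := by
  intro x y
  have h2 : ∑ y, f x y = 0 :=
    (Finset.sum_eq_zero_iff_of_nonneg
      (fun x _ => Finset.sum_nonneg fun y _ => h x y)).mp h0 x (Finset.mem_univ x)
  exact (Finset.sum_eq_zero_iff_of_nonneg (fun y _ => h x y)).mp h2 y (Finset.mem_univ y)

lemma margT_eq_sum_margTY [Fintype X] [Fintype Y] (P : T → X → Y → ℝ) (t : T) :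
    margT P t = ∑ y, margTY (fun t x y => P t x y) t y := by
  unfold margT margTY
  exact Finset.sum_comm

/-- marginals of Q0 agree with those of P -/
lemma Q0_margTX [Fintype X] [Fintype Y] (P : T → X → Y → ℝ)
    (hPnn : ∀ t x y, 0 ≤ P t x y) (t : T) (x : X) :
    margTX (Q0 P) t x = margTX P t x := by
  by_cases h0 : margT P t = 0
  · have hz : ∀ x y, P t x y = 0 := nested_zero (hPnn t) h0
    have hx : margTX P t x = 0 := Finset.sum_eq_zero fun y _ => hz x y
    simp [margTX, Q0, h0, hz]
  · show (∑ y, margTX P t x * margTY P t y / margT P t) = margTX P t x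
    rw [show (∑ y, margTX P t x * margTY P t y / margT P t)
        = margTX P t x * (∑ y, margTY P t y) / margT P t by
      rw [Finset.mul_sum, Finset.sum_div]]
    rw [← margT_eq_sum_margTY, mul_div_assoc, div_self h0, mul_one]

lemma Q0_margTY [Fintype X] [Fintype Y] (P : T → X → Y → ℝ)
    (hPnn : ∀ t x y, 0 ≤ P t x y) (t : T) (y : Y) :
    margTY (Q0 P) t y = margTY P t y := by
  by_cases h0 : margT P t = 0
  · have hz : ∀ x y, P t x y = 0 := nested_zero (hPnn t) h0
    have hy : margTY P t y = 0 := Finset.sum_eq_zero fun x _ => hz x y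
    simp [margTY, Q0, h0, hz]
  · show (∑ x, margTX P t x * margTY P t y / margT P t) = margTY P t y
    rw [show (∑ x, margTX P t x * margTY P t y / margT P t)
        = (∑ x, margTX P t x) * margTY P t y / margT P t by
      rw [Finset.sum_mul, Finset.sum_div]]
    have : (∑ x, margTX P t x) = margT P t := rfl
    rw [this, mul_comm, mul_div_assoc, div_self h0, mul_one]

lemma Q0_margT [Fintype X] [Fintype Y] (P : T → X → Y → ℝ)
    (hPnn : ∀ t x y, 0 ≤ P t x y) (t : T) :
    margT (Q0 P) t = margT P t := by
  have h1 : margT (Q0 P) t = ∑ x, margTX (Q0 P) t x := rfl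
  have h2 : margT P t = ∑ x, margTX P t x := rfl
  rw [h1, h2]
  exact Finset.sum_congr rfl fun x _ => Q0_margTX P hPnn t x

/-- `Q0` is the unique element of `Δ_P` satisfying `X ⊥ Y | T`, and its support is the
maximal support `supp(Δ_P) = ∪_{Q ∈ Δ_P} supp(Q)`. -/
theorem Q0_unique_CI_and_maximal_support [Fintype T] [Fintype X] [Fintype Y]
    (P : T → X → Y → ℝ) (hP : IsDist P) :
    Q0 P ∈ deltaP P ∧ CIXYgT (Q0 P) ∧
      (∀ Q ∈ deltaP P, CIXYgT Q → Q = Q0 P) ∧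
      (∀ t x y, Q0 P t x y ≠ 0 ↔ ∃ Q ∈ deltaP P, Q t x y ≠ 0) := by
  obtain ⟨hPnn, hPsum⟩ := hP
  have hTXnn : ∀ t x, 0 ≤ margTX P t x := fun t x => Finset.sum_nonneg fun _ _ => hPnn _ _ _
  have hTYnn : ∀ t y, 0 ≤ margTY P t y := fun t y => Finset.sum_nonneg fun _ _ => hPnn _ _ _
  have hTnn : ∀ t, 0 ≤ margT P t :=
    fun t => Finset.sum_nonneg fun _ _ => Finset.sum_nonneg fun _ _ => hPnn _ _ _
  have hQ0nn : ∀ t x y, 0 ≤ Q0 P t x y :=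
    fun t x y => div_nonneg (mul_nonneg (hTXnn t x) (hTYnn t y)) (hTnn t)
  have hmem : Q0 P ∈ deltaP P := by
    refine ⟨⟨hQ0nn, ?_⟩, fun t x => Q0_margTX P hPnn t x, fun t y => Q0_margTY P hPnn t y⟩
    have h1 : ∑ t, ∑ x, ∑ y, Q0 P t x y = ∑ t, margT (Q0 P) t := rfl
    have h2 : ∑ t, ∑ x, ∑ y, P t x y = ∑ t, margT P t := rfl
    rw [h1, Finset.sum_congr rfl fun t _ => Q0_margT P hPnn t, ← h2, hPsum]
  have hCI : CIXYgT (Q0 P) := by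
    intro t x y
    rw [Q0_margT P hPnn, Q0_margTX P hPnn, Q0_margTY P hPnn]
    by_cases h0 : margT P t = 0
    · have hz : ∀ x y, P t x y = 0 := nested_zero (hPnn t) h0
      have hx : margTX P t x = 0 := Finset.sum_eq_zero fun y _ => hz x y
      simp [Q0, h0, hx]
    · show margTX P t x * margTY P t y / margT P t * margT P t = _
      rw [div_mul_cancel₀ _ h0]
  refine ⟨hmem, hCI, ?_, ?_⟩
  · rintro Q ⟨⟨hQnn, _⟩, hQTX, hQTY⟩ hQCI
    funext t x y
    have hQT : margT Q t = margT P t := by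
      have h1 : margT Q t = ∑ x, margTX Q t x := rfl
      have h2 : margT P t = ∑ x, margTX P t x := rfl
      rw [h1, h2]; exact Finset.sum_congr rfl fun x _ => hQTX t x
    by_cases h0 : margT P t = 0
    · have hz : ∀ x y, Q t x y = 0 := nested_zero (hQnn t) (hQT.trans h0)
      have hqz : ∀ x y, P t x y = 0 := nested_zero (hPnn t) h0
      have hx : margTX P t x = 0 := Finset.sum_eq_zero fun y _ => hqz x y
      simp [hz, Q0, h0, hx]
    · have := hQCI t x y
      rw [hQT, hQTX, hQTY] at this
      show Q t x y = margTX P t x * margTY P t y / margT P t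
      rw [eq_div_iff h0]; exact this
  · intro t x y
    constructor
    · intro h; exact ⟨Q0 P, hmem, h⟩
    · rintro ⟨Q, ⟨⟨hQnn, _⟩, hQTX, hQTY⟩, hne⟩
      have hpos : 0 < Q t x y := lt_of_le_of_ne (hQnn t x y) (Ne.symm hne)
      have hxpos : 0 < margTX P t x := by
        rw [← hQTX t x]
        exact lt_of_lt_of_le hpos
          (Finset.single_le_sum (fun y' _ => hQnn t x y') (Finset.mem_univ y))
      have hypos : 0 < margTY P t y := by
        rw [← hQTY t y]
        exact lt_of_lt_of_le hpos
          (Finset.single_le_sum (fun x' _ => hQnn t x' y) (Finset.mem_univ x))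
      have hTpos : 0 < margT P t := by
        have : margTX P t x ≤ margT P t :=
          Finset.single_le_sum (f := fun x => ∑ y, P t x y)
            (fun x' _ => Finset.sum_nonneg fun _ _ => hPnn _ _ _) (Finset.mem_univ x)
        linarith
      exact ne_of_gt (div_pos (mul_pos hxpos hypos) hTpos)
end
end

section
/- The kernel of the linear map A sending a signed measure on 𝒯×𝒳×𝒴 to its pair of (T,X)- and (T,Y)-marginals has, for fixed x0 ∈ 𝒳 and y0 ∈ 𝒴, the basis Γ = {γ_{t;x,x0;y,y0} : x ∈ 𝒳∖{x0}, y ∈ 𝒴∖{y0}, t ∈ 𝒯}, where γ_{t;x,x';y,y'} = δ_{t,x,y} + δ_{t,x',y'} − δ_{t,x,y'} − δ_{t,x',y}. In particular, dim ker(A) = |𝒯|·(|𝒳|−1)·(|𝒴|−1). -/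
/-! Restricted to `T × (X ∖ {x0}) × (Y ∖ {y0})`, each `γ_{t;x,x0;y,y0}` is the point mass at
`(t, x, y)`. This makes `Γ` linearly independent, and shows that a kernel element `μ` agrees
with `∑ μ(t,x,y) γ_{t;x,x0;y,y0}` there. Finally, a kernel element vanishing on
`T × (X ∖ {x0}) × (Y ∖ {y0})` is zero: the `(T,X)`-marginal recovers its entries in column `y0`
off row `x0`, and then the `(T,Y)`-marginal recovers row `x0`. -/

open scoped BigOperators
noncomputable section

variable {T X Y : Type*}

/-- `γ_{t;x,x';y,y'} = δ_{t,x,y} + δ_{t,x',y'} − δ_{t,x,y'} − δ_{t,x',y}`, where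
`δ_{t,x,y}` is the point mass at `(t,x,y)`. -/
def gam [DecidableEq T] [DecidableEq X] [DecidableEq Y]
    (t : T) (x x' : X) (y y' : Y) : T → X → Y → ℝ := fun s u v =>
  (if s = t ∧ u = x ∧ v = y then (1 : ℝ) else 0) +
    (if s = t ∧ u = x' ∧ v = y' then 1 else 0) -
    (if s = t ∧ u = x ∧ v = y' then 1 else 0) -
    (if s = t ∧ u = x' ∧ v = y then 1 else 0)

/-- The linear map sending a (signed) measure on `𝒯 × 𝒳 × 𝒴` to its pair of
`(T,X)`- and `(T,Y)`-marginals. -/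
def margMap [Fintype X] [Fintype Y] :
    (T → X → Y → ℝ) →ₗ[ℝ] ((T → X → ℝ) × (T → Y → ℝ)) where
  toFun μ := (fun t x => ∑ y, μ t x y, fun t y => ∑ x, μ t x y)
  map_add' μ ν := by
    refine Prod.ext ?_ ?_ <;> funext t z <;> simp [Finset.sum_add_distrib]
  map_smul' c μ := by
    refine Prod.ext ?_ ?_ <;> funext t z <;> simp [Finset.mul_sum]

lemma eq_zero_of_mem_ker_margMap [Fintype X] [Fintype Y] {μ : T → X → Y → ℝ}
    (hμ : μ ∈ LinearMap.ker margMap) (x0 : X) (y0 : Y)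
    (h : ∀ t x y, x ≠ x0 → y ≠ y0 → μ t x y = 0) : μ = 0 := by
  have hrow : ∀ t x, ∑ y, μ t x y = 0 := fun t x => congrFun₂ (congrArg Prod.fst hμ) t x
  have hcol : ∀ t y, ∑ x, μ t x y = 0 := fun t y => congrFun₂ (congrArg Prod.snd hμ) t y
  have hoff : ∀ t x y, x ≠ x0 → μ t x y = 0 := by
    intro t x y hx
    by_cases hy : y = y0
    · subst hy
      rw [← hrow t x, Fintype.sum_eq_single y fun y' hy' => h t x y' hx hy']
    · exact h t x y hx hy
  funext t x y
  show μ t x y = 0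
  by_cases hx : x = x0
  · subst hx
    rw [← hcol t y, Fintype.sum_eq_single x fun x' hx' => hoff t x' y hx']
  · exact hoff t x y hx

section

variable [DecidableEq T] [DecidableEq X] [DecidableEq Y]

lemma gam_apply_eq_mul (t : T) (x x' : X) (y y' : Y) (s : T) (u : X) (v : Y) :
    gam t x x' y y' s u v =
      (if s = t then (1 : ℝ) else 0) *
        ((if u = x then (1 : ℝ) else 0) - (if u = x' then 1 else 0)) *
        ((if v = y then (1 : ℝ) else 0) - (if v = y' then 1 else 0)) := by
  simp only [gam]
  split_ifs <;> simp_all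

lemma gam_mem_ker_margMap [Fintype X] [Fintype Y] (t : T) (x x' : X) (y y' : Y) :
    gam t x x' y y' ∈ LinearMap.ker (margMap (T := T) (X := X) (Y := Y)) := by
  refine Prod.ext ?_ ?_ <;> funext s w <;>
    simp [margMap, gam_apply_eq_mul, ← Finset.mul_sum, ← Finset.sum_mul, Finset.sum_sub_distrib]

lemma gam_apply_of_ne (t : T) (x x' : X) (y y' : Y) (s : T) {u : X} {v : Y}
    (hu : u ≠ x') (hv : v ≠ y') :
    gam t x x' y y' s u v = if s = t ∧ u = x ∧ v = y then 1 else 0 := by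
  simp [gam, hu, hv]

def gamFamily (x0 : X) (y0 : Y) (i : T × {x : X // x ≠ x0} × {y : Y // y ≠ y0}) :
    T → X → Y → ℝ :=
  gam i.1 i.2.1 x0 i.2.2 y0

variable [Fintype T] [Fintype X] [Fintype Y]

lemma sum_smul_gamFamily_apply (x0 : X) (y0 : Y)
    (c : T × {x : X // x ≠ x0} × {y : Y // y ≠ y0} → ℝ)
    (t : T) (x : {x : X // x ≠ x0}) (y : {y : Y // y ≠ y0}) :
    (∑ i, c i • gamFamily x0 y0 i) t x y = c (t, x, y) := by
  have hpoint : ∀ i, gamFamily x0 y0 i t x y = if (t, x, y) = i then 1 else 0 := by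
    rintro ⟨t', x', y'⟩
    simp [gamFamily, gam_apply_of_ne _ _ _ _ _ _ x.2 y.2, Subtype.ext_iff]
  simp [Finset.sum_apply, hpoint]

lemma linearIndependent_gamFamily (x0 : X) (y0 : Y) :
    LinearIndependent ℝ (gamFamily (T := T) x0 y0) := by
  rw [Fintype.linearIndependent_iff]
  rintro c hc ⟨t, x, y⟩
  simpa using (sum_smul_gamFamily_apply x0 y0 c t x y).symm.trans (congrFun₃ hc t x y)

lemma eq_sum_smul_gamFamily_of_mem_ker {μ : T → X → Y → ℝ} (hμ : μ ∈ LinearMap.ker margMap)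
    (x0 : X) (y0 : Y) : μ = ∑ i, μ i.1 i.2.1 i.2.2 • gamFamily x0 y0 i := by
  rw [← sub_eq_zero]
  refine eq_zero_of_mem_ker_margMap ?_ x0 y0 fun t x y hx hy => ?_
  · exact sub_mem hμ (sum_mem fun i _ => Submodule.smul_mem _ _ (gam_mem_ker_margMap ..))
  · have := sum_smul_gamFamily_apply x0 y0 (fun i => μ i.1 i.2.1 i.2.2) t ⟨x, hx⟩ ⟨y, hy⟩
    rw [Pi.sub_apply, Pi.sub_apply, Pi.sub_apply, sub_eq_zero]
    exact this.symm

lemma span_gamFamily (x0 : X) (y0 : Y) :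
    Submodule.span ℝ (Set.range (gamFamily (T := T) x0 y0)) = LinearMap.ker margMap := by
  refine le_antisymm (Submodule.span_le.2 ?_) fun μ hμ => ?_
  · rintro _ ⟨i, rfl⟩
    exact gam_mem_ker_margMap ..
  · rw [eq_sum_smul_gamFamily_of_mem_ker hμ x0 y0]
    exact sum_mem fun i _ => Submodule.smul_mem _ _ (Submodule.subset_span ⟨i, rfl⟩)

end

/-- For fixed `x0 ∈ 𝒳`, `y0 ∈ 𝒴`, the family
`Γ = {γ_{t;x,x0;y,y0} : x ≠ x0, y ≠ y0, t ∈ 𝒯}` is a basis of `ker(A)`, where `A`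
is the marginal map; in particular
`dim ker(A) = |𝒯| · (|𝒳|−1) · (|𝒴|−1)`. -/
theorem ker_margMap_basis [Fintype T] [Fintype X] [Fintype Y]
    [DecidableEq T] [DecidableEq X] [DecidableEq Y] (x0 : X) (y0 : Y) :
    (∃ b : Module.Basis (T × {x : X // x ≠ x0} × {y : Y // y ≠ y0}) ℝ
        (LinearMap.ker (margMap (T := T) (X := X) (Y := Y))),
      ∀ i, (b i : T → X → Y → ℝ) = gam i.1 i.2.1.1 x0 i.2.2.1 y0) ∧
      Module.finrank ℝ (LinearMap.ker (margMap (T := T) (X := X) (Y := Y))) =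
        Fintype.card T * (Fintype.card X - 1) * (Fintype.card Y - 1) := by
  let b := (Module.Basis.span (linearIndependent_gamFamily (T := T) x0 y0)).map
    (LinearEquiv.ofEq _ _ (span_gamFamily x0 y0))
  refine ⟨⟨b, fun i => by simp [b, Module.Basis.span_apply, gamFamily]⟩, ?_⟩
  rw [Module.finrank_eq_card_basis b]
  simp [mul_assoc]
end
end

section
/- All directional derivatives of Q ↦ I_Q(T:X|Y) along the vectors γ_{t;x,x';y,y'} vanish at a strictly positive joint distribution Q if and only if, for every t with Q(T=t) > 0, the matrix (Q(t|x,y))_{x∈𝒳, y∈𝒴} has rank one. -/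
open scoped BigOperators
noncomputable section

variable {T X Y : Type*}

/-!
A matrix over a field has rank at most one exactly when its `2 × 2` minors vanish (around a
nonzero pivot entry every column is proportional to the pivot column), and a nonzero entry forces
rank at least one. For positive entries a minor vanishes exactly when the logarithm of the
corresponding cross ratio does. For `t` outside the support of `T` the slice `Q t` vanishes
identically, so the logarithm there is `Real.log 0 = 0`.
-/

theorem Real.log_div_eq_zero_iff {a b : ℝ} (ha : 0 < a) (hb : 0 < b) :
    Real.log (a / b) = 0 ↔ a = b :=
  ⟨fun h => (div_eq_one_iff_eq hb.ne').1 (Real.eq_one_of_pos_of_log_eq_zero (div_pos ha hb) h),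
    fun h => by rw [h, div_self hb.ne', Real.log_one]⟩

namespace Matrix

variable {m n K : Type*} [Fintype n] [Field K]

theorem mul_eq_mul_of_rank_le_one {M : Matrix m n K} (h : M.rank ≤ 1) (i i' : m) (j j' : n) :
    M i j * M i' j' = M i j' * M i' j := by
  by_contra hne
  have hdet : (M.submatrix ![i, i'] ![j, j']).det ≠ 0 := by
    rw [det_fin_two]
    simpa [sub_eq_zero] using hne
  have := (rank_of_det_ne_zero hdet).symm.trans_le (rank_submatrix_le M ![i, i'] ![j, j'])
  simp only [Fintype.card_fin] at this
  omega

theorem one_le_rank_of_ne_zero {M : Matrix m n K} {i : m} {j : n} (h : M i j ≠ 0) :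
    1 ≤ M.rank := by
  have hdet : (M.submatrix (fun _ : Fin 1 => i) (fun _ : Fin 1 => j)).det ≠ 0 := by
    simpa [det_unique] using h
  simpa using (rank_of_det_ne_zero hdet).symm.trans_le (rank_submatrix_le M _ _)

theorem rank_le_one_of_mul_eq_mul {M : Matrix m n K}
    (h : ∀ i i' j j', M i j * M i' j' = M i j' * M i' j) : M.rank ≤ 1 := by
  by_cases hM : ∃ i₀ j₀, M i₀ j₀ ≠ 0
  · obtain ⟨i₀, j₀, h₀⟩ := hM
    have hM : M = vecMulVec (fun i => M i j₀) (fun j => M i₀ j / M i₀ j₀) := by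
      ext i j
      rw [vecMulVec_apply, mul_div_assoc', eq_div_iff h₀, h i i₀ j j₀]
    rw [hM]
    exact rank_vecMulVec_le _ _
  · push Not at hM
    rw [show M = 0 from ext hM, rank_zero]
    exact zero_le_one

theorem rank_eq_one_iff_mul_eq_mul {M : Matrix m n K} {i₀ : m} {j₀ : n} (h₀ : M i₀ j₀ ≠ 0) :
    M.rank = 1 ↔ ∀ i i' j j', M i j * M i' j' = M i j' * M i' j :=
  ⟨fun h => mul_eq_mul_of_rank_le_one h.le, fun h =>
    (rank_le_one_of_mul_eq_mul h).antisymm (one_le_rank_of_ne_zero h₀)⟩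

theorem rank_eq_one_iff_log_cross_ratio_eq_zero [Nonempty m] [Nonempty n] {M : Matrix m n ℝ}
    (hM : ∀ i j, 0 < M i j) :
    M.rank = 1 ↔ ∀ i i' j j', Real.log (M i j * M i' j' / (M i j' * M i' j)) = 0 := by
  obtain ⟨i₀⟩ := ‹Nonempty m›
  obtain ⟨j₀⟩ := ‹Nonempty n›
  rw [rank_eq_one_iff_mul_eq_mul (hM i₀ j₀).ne']
  exact forall₄_congr fun i i' j j' =>
    (Real.log_div_eq_zero_iff (mul_pos (hM i j) (hM i' j')) (mul_pos (hM i j') (hM i' j))).symm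

end Matrix

section Marginals

variable {P : T → X → Y → ℝ}

theorem margT_nonneg [Fintype X] [Fintype Y] (hP : ∀ t x y, 0 ≤ P t x y) (t : T) :
    0 ≤ margT P t :=
  Finset.sum_nonneg fun x _ => Finset.sum_nonneg fun y _ => hP t x y

theorem eq_zero_of_margT_eq_zero [Fintype X] [Fintype Y] (hP : ∀ t x y, 0 ≤ P t x y) {t : T}
    (ht : margT P t = 0) (x : X) (y : Y) : P t x y = 0 := by
  rw [margT, Finset.sum_eq_zero_iff_of_nonneg fun x _ => Finset.sum_nonneg fun y _ => hP t x y]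
    at ht
  exact (Finset.sum_eq_zero_iff_of_nonneg fun y _ => hP t x y).1 (ht x (Finset.mem_univ x)) y
    (Finset.mem_univ y)

theorem exists_ne_zero_of_margT_ne_zero [Fintype X] [Fintype Y] {t : T} (ht : margT P t ≠ 0) :
    ∃ x y, P t x y ≠ 0 := by
  obtain ⟨x, -, hx⟩ := Finset.exists_ne_zero_of_sum_ne_zero ht
  obtain ⟨y, -, hy⟩ := Finset.exists_ne_zero_of_sum_ne_zero hx
  exact ⟨x, y, hy⟩

theorem margXY_pos_of_pos [Fintype T] (hP : ∀ t x y, 0 ≤ P t x y) {t : T} {x : X} {y : Y}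
    (h : 0 < P t x y) : 0 < margXY P x y :=
  h.trans_le (Finset.single_le_sum (fun s _ => hP s x y) (Finset.mem_univ t))

end Marginals

theorem derivatives_vanish_iff_rank_one_general [Fintype T] [Fintype X] [Fintype Y]
    (Q : T → X → Y → ℝ) (hQ : IsDist Q)
    (hpos : ∀ t, 0 < margT Q t → ∀ x y, 0 < Q t x y) :
    (∀ (t : T) (x x' : X) (y y' : Y),
        Real.log ((Q t x y / margXY Q x y) * (Q t x' y' / margXY Q x' y') /
          ((Q t x y' / margXY Q x y') * (Q t x' y / margXY Q x' y))) = 0) ↔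
      ∀ t, 0 < margT Q t →
        (Matrix.of fun x y => Q t x y / margXY Q x y : Matrix X Y ℝ).rank = 1 := by
  obtain ⟨hnn, -⟩ := hQ
  have hcond_pos : ∀ t, 0 < margT Q t → ∀ x y, 0 < Q t x y / margXY Q x y :=
    fun t ht x y => div_pos (hpos t ht x y) (margXY_pos_of_pos hnn (hpos t ht x y))
  have hnonempty : ∀ t, 0 < margT Q t → Nonempty X ∧ Nonempty Y := fun t ht =>
    let ⟨x, y, _⟩ := exists_ne_zero_of_margT_ne_zero ht.ne'
    ⟨⟨x⟩, ⟨y⟩⟩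
  constructor
  · intro h t ht
    obtain ⟨_, _⟩ := hnonempty t ht
    exact (Matrix.rank_eq_one_iff_log_cross_ratio_eq_zero (hcond_pos t ht)).2 (h t)
  · intro h t
    by_cases ht : 0 < margT Q t
    · obtain ⟨_, _⟩ := hnonempty t ht
      exact (Matrix.rank_eq_one_iff_log_cross_ratio_eq_zero (hcond_pos t ht)).1 (h t ht)
    · have hQt := eq_zero_of_margT_eq_zero hnn (le_antisymm (not_lt.1 ht) (margT_nonneg hnn t))
      intro x x' y y'
      simp [hQt]

/-- At a strictly positive joint distribution `Q`, all directional derivatives of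
`Q ↦ I_Q(T:X|Y)` along the vectors `γ_{t;x,x';y,y'}` (which equal
`log (Q(t|x,y) Q(t|x',y') / (Q(t|x,y') Q(t|x',y)))`) vanish if and only if, for every
`t` with `Q(T=t) > 0`, the matrix `(Q(t|x,y))_{x,y}` has rank one. -/
theorem derivatives_vanish_iff_rank_one [Fintype T] [Fintype X] [Fintype Y]
    [DecidableEq X] [DecidableEq Y]
    (Q : T → X → Y → ℝ) (hQ : IsDist Q)
    (hpos : ∀ t, 0 < margT Q t → ∀ x y, 0 < Q t x y) :
    (∀ (t : T) (x x' : X) (y y' : Y),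
        Real.log ((Q t x y / margXY Q x y) * (Q t x' y' / margXY Q x' y') /
          ((Q t x y' / margXY Q x y') * (Q t x' y / margXY Q x' y))) = 0) ↔
      ∀ t, 0 < margT Q t →
        (Matrix.of fun x y => Q t x y / margXY Q x y : Matrix X Y ℝ).rank = 1 :=
  derivatives_vanish_iff_rank_one_general Q hQ hpos
end
end

section
/- Suppose H(X) > 0, H(Y) > 0, and under P both T ⊥ X and T ⊥ Y. Then the set of maximizers of H_Q(T|X,Y) over Δ_P contains more than one element; indeed, the product distribution Q0(t,x,y) = P(t)P(x)P(y) is a maximizer, and so is Q0 + δ·P(t)·γ_{t;x0,x1;y0,y1} for all sufficiently small δ ≠ 0, where x0,x1 (resp. y0,y1) are distinct points of positive P_X (resp. P_Y) probability. -/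
open scoped BigOperators
noncomputable section

variable {T X Y : Type*}

/-- The `X`-marginal. -/
def margX [Fintype T] [Fintype Y] (P : T → X → Y → ℝ) (x : X) : ℝ := ∑ t, ∑ y, P t x y

lemma gibbs (a b : ℝ) (ha : 0 ≤ a) (hb : 0 ≤ b) (h : a ≠ 0 → b ≠ 0) :
    a - b ≤ a * Real.log (a / b) := by
  rcases eq_or_lt_of_le ha with h0 | ha'
  · simp [← h0]; linarith
  · have hb' : 0 < b := hb.lt_of_ne (Ne.symm (h ha'.ne'))
    have hl := Real.log_le_sub_one_of_pos (div_pos hb' ha')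
    rw [Real.log_div hb'.ne' ha'.ne'] at hl
    rw [Real.log_div ha'.ne' hb'.ne']
    have : b / a * a = b := div_mul_cancel₀ _ ha'.ne'
    nlinarith

/-- value of entropy on product-form distributions -/
lemma condEnt_prod [Fintype T] [Fintype X] [Fintype Y] (p : T → ℝ) (R : X → Y → ℝ)
    (hps : ∑ t, p t = 1) (hRs : ∑ x, ∑ y, R x y = 1) :
    condEntTXY (fun t x y => p t * R x y) = ∑ t, -(p t * Real.log (p t)) := by
  have hm : ∀ x y, margXY (fun t x y => p t * R x y) x y = R x y := by
    intro x y; simp only [margXY, ← Finset.sum_mul, hps, one_mul]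
  unfold condEntTXY
  have hterm : ∀ t x y, -((fun t x y => p t * R x y) t x y *
      Real.log ((fun t x y => p t * R x y) t x y /
        margXY (fun t x y => p t * R x y) x y)) = -(p t * Real.log (p t) * R x y) := by
    intro t x y
    rw [hm]
    by_cases hxy : R x y = 0
    · simp [hxy]
    · rw [mul_div_assoc, div_self hxy, mul_one]; ring
  calc ∑ t, ∑ x, ∑ y, -((fun t x y => p t * R x y) t x y *
        Real.log ((fun t x y => p t * R x y) t x y /
          margXY (fun t x y => p t * R x y) x y))
      = ∑ t, ∑ x, ∑ y, -(p t * Real.log (p t) * R x y) := by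
        refine Finset.sum_congr rfl fun t _ => Finset.sum_congr rfl fun x _ =>
          Finset.sum_congr rfl fun y _ => hterm t x y
    _ = ∑ t, -(p t * Real.log (p t)) := by
        refine Finset.sum_congr rfl fun t _ => ?_
        rw [show ∀ c : ℝ, ∑ x, ∑ y, -(c * R x y) = -(c * ∑ x, ∑ y, R x y) from
          fun c => by simp [Finset.mul_sum], hRs, mul_one]

/-- membership of product-form distributions in Δ_P -/
lemma prodForm_mem [Fintype T] [Fintype X] [Fintype Y] (P : T → X → Y → ℝ) (R : X → Y → ℝ)
    (hTX : ∀ t x, margTX P t x = margT P t * margX P x)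
    (hTY : ∀ t y, margTY P t y = margT P t * margY P y)
    (hpT : ∀ t, 0 ≤ margT P t)
    (hRnn : ∀ x y, 0 ≤ R x y)
    (hRX : ∀ x, ∑ y, R x y = margX P x)
    (hRY : ∀ y, ∑ x, R x y = margY P y)
    (hpts : ∑ t, margT P t = 1) (hpxs : ∑ x, margX P x = 1) :
    (fun t x y => margT P t * R x y) ∈ deltaP P := by
  refine ⟨⟨fun t x y => mul_nonneg (hpT t) (hRnn x y), ?_⟩, fun t x => ?_, fun t y => ?_⟩
  · calc ∑ t, ∑ x, ∑ y, margT P t * R x y = ∑ t, margT P t * ∑ x, ∑ y, R x y := by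
          simp [Finset.mul_sum]
      _ = 1 := by
          have : ∑ x, ∑ y, R x y = 1 := by rw [Finset.sum_congr rfl fun x _ => hRX x, hpxs]
          simp [this, hpts]
  · simp only [margTX]
    rw [show ∑ y, margT P t * R x y = margT P t * ∑ y, R x y from by simp [Finset.mul_sum],
      hRX]
    exact (hTX t x).symm
  · simp only [margTY]
    rw [show ∑ x, margT P t * R x y = margT P t * ∑ x, R x y from by simp [Finset.mul_sum],
      hRY]
    exact (hTY t y).symm

lemma condEnt_le_H [Fintype T] [Fintype X] [Fintype Y] (P Q : T → X → Y → ℝ)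
    (hQ : Q ∈ deltaP P) :
    condEntTXY Q ≤ ∑ t, -(margT P t * Real.log (margT P t)) := by
  obtain ⟨⟨hQnn, hQsum⟩, hQTX, hQTY⟩ := hQ
  have hT : ∀ t, margT Q t = margT P t := by
    intro t
    calc margT Q t = ∑ x, margTX Q t x := rfl
      _ = ∑ x, margTX P t x := Finset.sum_congr rfl fun x _ => hQTX t x
      _ = margT P t := rfl
  have hmnn : ∀ x y, 0 ≤ margXY Q x y := fun x y =>
    Finset.sum_nonneg fun t _ => hQnn t x y
  have hpTnn : ∀ t, 0 ≤ margT P t := fun t =>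
    (hT t) ▸ (Finset.sum_nonneg fun x _ => Finset.sum_nonneg fun y _ => hQnn t x y)
  have key : ∀ t x y, -(Q t x y * Real.log (Q t x y / margXY Q x y)) ≤
      -(Q t x y * Real.log (margT P t)) + (margXY Q x y * margT P t - Q t x y) := by
    intro t x y
    by_cases hq : Q t x y = 0
    · simp only [hq, zero_mul, neg_zero, sub_zero, zero_add]
      exact mul_nonneg (hmnn x y) (hpTnn t)
    · have hq' : 0 < Q t x y := (hQnn t x y).lt_of_ne (Ne.symm hq)
      have hm : 0 < margXY Q x y := lt_of_lt_of_le hq'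
        (Finset.single_le_sum (fun t _ => hQnn t x y) (Finset.mem_univ t))
      have hp : 0 < margT P t := by
        rw [← hT t]
        refine lt_of_lt_of_le hq' ?_
        calc Q t x y ≤ ∑ y, Q t x y :=
              Finset.single_le_sum (fun y _ => hQnn t x y) (Finset.mem_univ y)
          _ ≤ ∑ x, ∑ y, Q t x y :=
              Finset.single_le_sum (fun x _ => Finset.sum_nonneg fun y _ => hQnn t x y)
                (Finset.mem_univ x)
      have hg := gibbs (Q t x y) (margXY Q x y * margT P t) hq'.le
        (mul_nonneg hm.le hp.le) (fun _ => (mul_pos hm hp).ne')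
      rw [Real.log_div hq (mul_pos hm hp).ne', Real.log_mul hm.ne' hp.ne'] at hg
      rw [Real.log_div hq hm.ne']
      nlinarith [hg]
  have h1 : ∑ t, ∑ x, ∑ y, -(Q t x y * Real.log (margT P t)) =
      ∑ t, -(margT P t * Real.log (margT P t)) := by
    refine Finset.sum_congr rfl fun t _ => ?_
    calc ∑ x, ∑ y, -(Q t x y * Real.log (margT P t))
        = ∑ x, ∑ y, (-Real.log (margT P t)) * Q t x y := by
          refine Finset.sum_congr rfl fun x _ => Finset.sum_congr rfl fun y _ => by ring
      _ = (-Real.log (margT P t)) * ∑ x, ∑ y, Q t x y := by simp [Finset.mul_sum]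
      _ = -(margT P t * Real.log (margT P t)) := by
          rw [show ∑ x, ∑ y, Q t x y = margT Q t from rfl, hT]; ring
  have hmsum : ∑ x, ∑ y, margXY Q x y = 1 := by
    simp only [margXY]
    rw [Finset.sum_congr rfl fun x _ => Finset.sum_comm .., Finset.sum_comm]
    exact hQsum
  have hpts : ∑ t, margT P t = 1 := by
    rw [← Finset.sum_congr rfl fun t _ => hT t]
    exact hQsum
  have h2 : ∑ t, ∑ x, ∑ y, (margXY Q x y * margT P t - Q t x y) = 0 := by
    have e1 : ∑ t, ∑ x, ∑ y, margXY Q x y * margT P t = 1 := by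
      calc ∑ t, ∑ x, ∑ y, margXY Q x y * margT P t
          = ∑ t, margT P t * ∑ x, ∑ y, margXY Q x y := by
            refine Finset.sum_congr rfl fun t _ => ?_
            simp [Finset.mul_sum, mul_comm]
        _ = 1 := by rw [Finset.sum_congr rfl fun t _ => by rw [hmsum, mul_one], hpts]
    simp only [Finset.sum_sub_distrib]
    rw [e1, hQsum]
    ring
  calc condEntTXY Q
      ≤ ∑ t, ∑ x, ∑ y, (-(Q t x y * Real.log (margT P t)) +
          (margXY Q x y * margT P t - Q t x y)) :=
        Finset.sum_le_sum fun t _ => Finset.sum_le_sum fun x _ =>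
          Finset.sum_le_sum fun y _ => key t x y
    _ = ∑ t, -(margT P t * Real.log (margT P t)) := by
        simp only [Finset.sum_add_distrib]
        rw [h1, h2, add_zero]

lemma two_points {X : Type*} [Fintype X] (p : X → ℝ) (hnn : ∀ x, 0 ≤ p x)
    (hs : ∑ x, p x = 1) (hH : 0 < ∑ x, -(p x * Real.log (p x))) :
    ∃ x0 x1 : X, x0 ≠ x1 ∧ 0 < p x0 ∧ 0 < p x1 := by
  have hle1 : ∀ x, p x ≤ 1 := fun x =>
    hs ▸ Finset.single_le_sum (fun x _ => hnn x) (Finset.mem_univ x)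
  obtain ⟨x0, -, hx0⟩ : ∃ x0 ∈ Finset.univ, 0 < -(p x0 * Real.log (p x0)) := by
    by_contra hc
    push_neg at hc
    have : ∑ x, -(p x * Real.log (p x)) ≤ 0 :=
      Finset.sum_nonpos fun x hx => hc x hx
    linarith
  have hx0pos : 0 < p x0 := by
    rcases (hnn x0).lt_or_eq with h | h
    · exact h
    · exfalso; rw [← h] at hx0; simp at hx0
  have hx0lt1 : p x0 < 1 := by
    rcases (hle1 x0).lt_or_eq with h | h
    · exact h
    · exfalso; rw [h] at hx0; simp at hx0
  obtain ⟨x1, hx1ne, hx1⟩ : ∃ x1, x1 ≠ x0 ∧ 0 < p x1 := by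
    by_contra hc
    push_neg at hc
    have : ∑ x, p x = p x0 := by
      refine Finset.sum_eq_single x0 (fun x _ hx => ?_) (fun h => absurd (Finset.mem_univ x0) h)
      exact le_antisymm (hc x hx) (hnn x)
    rw [hs] at this; linarith
  exact ⟨x0, x1, hx1ne.symm, hx0pos, hx1⟩

lemma marg_facts [Fintype T] [Fintype X] [Fintype Y] (P : T → X → Y → ℝ)
    (hP : IsDist P) :
    (∀ t, 0 ≤ margT P t) ∧ (∀ x, 0 ≤ margX P x) ∧ (∀ y, 0 ≤ margY P y) ∧
    (∑ t, margT P t = 1) ∧ (∑ x, margX P x = 1) ∧ (∑ y, margY P y = 1) := by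
  obtain ⟨hnn, hsum⟩ := hP
  refine ⟨fun t => Finset.sum_nonneg fun x _ => Finset.sum_nonneg fun y _ => hnn t x y,
    fun x => Finset.sum_nonneg fun t _ => Finset.sum_nonneg fun y _ => hnn t x y,
    fun y => Finset.sum_nonneg fun t _ => Finset.sum_nonneg fun x _ => hnn t x y,
    hsum, ?_, ?_⟩
  · simp only [margX]
    rw [Finset.sum_comm]
    exact hsum
  · simp only [margY]
    calc ∑ y : Y, ∑ t : T, ∑ x : X, P t x y
        = ∑ t : T, ∑ y : Y, ∑ x : X, P t x y := Finset.sum_comm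
      _ = ∑ t : T, ∑ x : X, ∑ y : Y, P t x y :=
          Finset.sum_congr rfl fun t _ => Finset.sum_comm
      _ = 1 := hsum


/-- Suppose `H(X) > 0`, `H(Y) > 0` and under `P` both `T ⊥ X` and `T ⊥ Y`.  Then the
product distribution `Q0(t,x,y) = P(t)P(x)P(y)` is a maximizer of `H_Q(T|X,Y)` over
`Δ_P`, the perturbations `Q0 + δ P(t) γ_{t;x0,x1;y0,y1}` are maximizers for all
sufficiently small `δ`, and in particular the set of maximizers has more than one
element. -/
theorem nonuniqueness_double_independence [Fintype T] [Fintype X] [Fintype Y]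
    [DecidableEq X] [DecidableEq Y]
    (P : T → X → Y → ℝ) (hP : IsDist P)
    (hHX : 0 < ∑ x, -(margX P x * Real.log (margX P x)))
    (hHY : 0 < ∑ y, -(margY P y * Real.log (margY P y)))
    (hTX : ∀ t x, margTX P t x = margT P t * margX P x)
    (hTY : ∀ t y, margTY P t y = margT P t * margY P y) :
    (fun t x y => margT P t * margX P x * margY P y) ∈ deltaP P ∧
    (∀ Q ∈ deltaP P,
        condEntTXY Q ≤ condEntTXY (fun t x y => margT P t * margX P x * margY P y)) ∧
    (∀ x0 x1 : X, ∀ y0 y1 : Y, x0 ≠ x1 → y0 ≠ y1 →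
      0 < margX P x0 → 0 < margX P x1 → 0 < margY P y0 → 0 < margY P y1 →
      ∃ ε > (0 : ℝ), ∀ δ : ℝ, |δ| < ε →
        (fun t x y => margT P t * margX P x * margY P y +
            δ * margT P t *
              ((if x = x0 then (1:ℝ) else if x = x1 then -1 else 0) *
                (if y = y0 then (1:ℝ) else if y = y1 then -1 else 0))) ∈ deltaP P ∧
        (∀ Q ∈ deltaP P, condEntTXY Q ≤
          condEntTXY (fun t x y => margT P t * margX P x * margY P y +
            δ * margT P t *
              ((if x = x0 then (1:ℝ) else if x = x1 then -1 else 0) *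
                (if y = y0 then (1:ℝ) else if y = y1 then -1 else 0))))) ∧
    (∃ Q1 Q2 : T → X → Y → ℝ, Q1 ∈ deltaP P ∧ Q2 ∈ deltaP P ∧ Q1 ≠ Q2 ∧
      (∀ Q ∈ deltaP P, condEntTXY Q ≤ condEntTXY Q1) ∧
      (∀ Q ∈ deltaP P, condEntTXY Q ≤ condEntTXY Q2)) := by
  obtain ⟨hpTnn, hpXnn, hpYnn, hpTs, hpXs, hpYs⟩ := marg_facts P hP
  -- the product distribution
  have hQ0eq : (fun t x y => margT P t * margX P x * margY P y) =
      (fun t x y => margT P t * (margX P x * margY P y)) := by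
    funext t x y; ring
  have hR0X : ∀ x, ∑ y, margX P x * margY P y = margX P x := by
    intro x; rw [← Finset.mul_sum, hpYs, mul_one]
  have hR0Y : ∀ y, ∑ x, margX P x * margY P y = margY P y := by
    intro y; rw [← Finset.sum_mul, hpXs, one_mul]
  have hR0s : ∑ x, ∑ y, margX P x * margY P y = 1 := by
    rw [Finset.sum_congr rfl fun x _ => hR0X x, hpXs]
  have mem0 : (fun t x y => margT P t * margX P x * margY P y) ∈ deltaP P := by
    rw [hQ0eq]
    exact prodForm_mem P _ hTX hTY hpTnn
      (fun x y => mul_nonneg (hpXnn x) (hpYnn y)) hR0X hR0Y hpTs hpXs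
  have val0 : condEntTXY (fun t x y => margT P t * margX P x * margY P y) =
      ∑ t, -(margT P t * Real.log (margT P t)) := by
    rw [hQ0eq]; exact condEnt_prod _ _ hpTs hR0s
  have max0 : ∀ Q ∈ deltaP P, condEntTXY Q ≤
      condEntTXY (fun t x y => margT P t * margX P x * margY P y) := by
    intro Q hQ; rw [val0]; exact condEnt_le_H P Q hQ
  have part3 : ∀ x0 x1 : X, ∀ y0 y1 : Y, x0 ≠ x1 → y0 ≠ y1 →
      0 < margX P x0 → 0 < margX P x1 → 0 < margY P y0 → 0 < margY P y1 →
      ∃ ε > (0 : ℝ), ∀ δ : ℝ, |δ| < ε →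
        (fun t x y => margT P t * margX P x * margY P y +
            δ * margT P t *
              ((if x = x0 then (1:ℝ) else if x = x1 then -1 else 0) *
                (if y = y0 then (1:ℝ) else if y = y1 then -1 else 0))) ∈ deltaP P ∧
        (∀ Q ∈ deltaP P, condEntTXY Q ≤
          condEntTXY (fun t x y => margT P t * margX P x * margY P y +
            δ * margT P t *
              ((if x = x0 then (1:ℝ) else if x = x1 then -1 else 0) *
                (if y = y0 then (1:ℝ) else if y = y1 then -1 else 0)))) := by
    intro x0 x1 y0 y1 hxx hyy hx0 hx1 hy0 hy1
    set ζ : X → ℝ := fun x => if x = x0 then (1:ℝ) else if x = x1 then -1 else 0 with hζ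
    set η : Y → ℝ := fun y => if y = y0 then (1:ℝ) else if y = y1 then -1 else 0 with hη
    have hζs : ∑ x, ζ x = 0 := by
      have : ∀ x, ζ x = (if x = x0 then (1:ℝ) else 0) + (if x = x1 then (-1:ℝ) else 0) := by
        intro x
        simp only [hζ]
        by_cases h0 : x = x0
        · subst h0; simp [hxx]
        · by_cases h1 : x = x1 <;> simp [h0, h1, Ne.symm hxx]
      rw [Finset.sum_congr rfl fun x _ => this x, Finset.sum_add_distrib,
        Finset.sum_ite_eq' Finset.univ x0, Finset.sum_ite_eq' Finset.univ x1]
      simp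
    have hηs : ∑ y, η y = 0 := by
      have : ∀ y, η y = (if y = y0 then (1:ℝ) else 0) + (if y = y1 then (-1:ℝ) else 0) := by
        intro y
        simp only [hη]
        by_cases h0 : y = y0
        · subst h0; simp [hyy]
        · by_cases h1 : y = y1 <;> simp [h0, h1, Ne.symm hyy]
      rw [Finset.sum_congr rfl fun y _ => this y, Finset.sum_add_distrib,
        Finset.sum_ite_eq' Finset.univ y0, Finset.sum_ite_eq' Finset.univ y1]
      simp
    refine ⟨min (min (margX P x0 * margY P y0) (margX P x0 * margY P y1))
      (min (margX P x1 * margY P y0) (margX P x1 * margY P y1)),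
      lt_min (lt_min (mul_pos hx0 hy0) (mul_pos hx0 hy1))
        (lt_min (mul_pos hx1 hy0) (mul_pos hx1 hy1)), fun δ hδ => ?_⟩
    obtain ⟨hδ1, hδ2⟩ := abs_lt.mp hδ
    have e00 : min (min (margX P x0 * margY P y0) (margX P x0 * margY P y1))
        (min (margX P x1 * margY P y0) (margX P x1 * margY P y1)) ≤ margX P x0 * margY P y0 :=
      (min_le_left _ _).trans (min_le_left _ _)
    have e01 : min (min (margX P x0 * margY P y0) (margX P x0 * margY P y1))
        (min (margX P x1 * margY P y0) (margX P x1 * margY P y1)) ≤ margX P x0 * margY P y1 :=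
      (min_le_left _ _).trans (min_le_right _ _)
    have e10 : min (min (margX P x0 * margY P y0) (margX P x0 * margY P y1))
        (min (margX P x1 * margY P y0) (margX P x1 * margY P y1)) ≤ margX P x1 * margY P y0 :=
      (min_le_right _ _).trans (min_le_left _ _)
    have e11 : min (min (margX P x0 * margY P y0) (margX P x0 * margY P y1))
        (min (margX P x1 * margY P y0) (margX P x1 * margY P y1)) ≤ margX P x1 * margY P y1 :=
      (min_le_right _ _).trans (min_le_right _ _)
    set R : X → Y → ℝ := fun x y => margX P x * margY P y + δ * (ζ x * η y) with hR
    have hQδeq : (fun t x y => margT P t * margX P x * margY P y +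
        δ * margT P t * (ζ x * η y)) = (fun t x y => margT P t * R x y) := by
      funext t x y; simp only [hR]; ring
    have hRnn : ∀ x y, 0 ≤ R x y := by
      intro x y
      simp only [hR, hζ, hη]
      split_ifs <;> subst_vars <;> ring_nf <;>
        first
          | linarith [e00, e01, e10, e11, hδ1, hδ2]
          | exact mul_nonneg (hpXnn _) (hpYnn _)
    have hRX : ∀ x, ∑ y, R x y = margX P x := by
      intro x
      simp only [hR]
      rw [Finset.sum_add_distrib, hR0X,
        show ∑ y, δ * (ζ x * η y) = δ * ζ x * ∑ y, η y from by
          rw [Finset.mul_sum]; exact Finset.sum_congr rfl fun y _ => by ring,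
        hηs, mul_zero, add_zero]
    have hRY : ∀ y, ∑ x, R x y = margY P y := by
      intro y
      simp only [hR]
      rw [Finset.sum_add_distrib, hR0Y,
        show ∑ x, δ * (ζ x * η y) = δ * η y * ∑ x, ζ x from by
          rw [Finset.mul_sum]; exact Finset.sum_congr rfl fun x _ => by ring,
        hζs, mul_zero, add_zero]
    have hRs : ∑ x, ∑ y, R x y = 1 := by
      rw [Finset.sum_congr rfl fun x _ => hRX x, hpXs]
    constructor
    · rw [hQδeq]
      exact prodForm_mem P R hTX hTY hpTnn hRnn hRX hRY hpTs hpXs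
    · intro Q hQ
      rw [hQδeq, condEnt_prod _ _ hpTs hRs]
      exact condEnt_le_H P Q hQ
  refine ⟨mem0, max0, part3, ?_⟩
  obtain ⟨x0, x1, hxx, hx0, hx1⟩ := two_points (margX P) hpXnn hpXs hHX
  obtain ⟨y0, y1, hyy, hy0, hy1⟩ := two_points (margY P) hpYnn hpYs hHY
  obtain ⟨ε, hε, hmax⟩ := part3 x0 x1 y0 y1 hxx hyy hx0 hx1 hy0 hy1
  have hδε : |ε / 2| < ε := by rw [abs_of_pos (by linarith)]; linarith
  obtain ⟨mem2, max2⟩ := hmax (ε / 2) hδε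
  obtain ⟨t, ht⟩ : ∃ t, 0 < margT P t := by
    by_contra hc
    push_neg at hc
    have : ∑ t, margT P t ≤ 0 := Finset.sum_nonpos fun t _ => hc t
    linarith [hpTs]
  refine ⟨_, _, mem0, mem2, ?_, max0, max2⟩
  intro h
  have h2 := congrFun (congrFun (congrFun h t) x0) y0
  norm_num at h2
  rcases h2 with h2 | h2 <;> nlinarith [ht, hε]
end
end

section
/- Suppose |𝒯| < min{|𝒳|, |𝒴|}. If there exists a maximizer Q* of H_Q(T|X,Y) over Δ_P with full support (Q*(t,x,y) > 0 for all t,x,y), then the maximizer is not unique. -/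
/-!
At a full-support maximizer `Q*`, stationarity along the directions
`δ_t ⊗ (δ_{x₁} - δ_{x₂}) ⊗ (δ_{y₁} - δ_{y₂})`, which preserve the `(T,X)`- and `(T,Y)`-marginals,
forces `Q*(t|x,y) = a t x * b t y`. Since `|𝒯| < |𝒳|` and `|𝒯| < |𝒴|` there are nonzero `u`, `v`
with `∑ₓ a t x u x = 0` and `∑_y b t y v y = 0` for all `t`, so `D t x y = Q*(t|x,y) u x v y` also
preserves both marginals. Moving along `D` changes the `(X,Y)`-marginal but not `Q*(t|x,y)`, so
`H(T|X,Y)` is affine on the line `Q* + c D`; its slope vanishes by stationarity, and every small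
`c ≠ 0` gives another maximizer.
-/

open scoped BigOperators
noncomputable section

variable {T X Y : Type*}

open Filter Topology

/-- The conditional distribution `Q(t | x, y)`. -/
def condProb [Fintype T] (Q : T → X → Y → ℝ) (t : T) (x : X) (y : Y) : ℝ :=
  Q t x y / margXY Q x y

lemma margTX_add_smul [Fintype Y] (Q D : T → X → Y → ℝ) (c : ℝ) :
    margTX (Q + c • D) = margTX Q + c • margTX D := by
  funext t x
  simp [margTX, Finset.sum_add_distrib, Finset.mul_sum]

lemma margTY_add_smul [Fintype X] (Q D : T → X → Y → ℝ) (c : ℝ) :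
    margTY (Q + c • D) = margTY Q + c • margTY D := by
  funext t y
  simp [margTY, Finset.sum_add_distrib, Finset.mul_sum]

lemma margXY_add_smul [Fintype T] (Q D : T → X → Y → ℝ) (c : ℝ) :
    margXY (Q + c • D) = margXY Q + c • margXY D := by
  funext x y
  simp [margXY, Finset.sum_add_distrib, Finset.mul_sum]

lemma margTX_mul_eq_zero [Fintype Y] (f : T → X → ℝ) {g : T → Y → ℝ}
    (hg : ∀ t, ∑ y, g t y = 0) : margTX (fun t x y => f t x * g t y) = 0 := by
  funext t x
  simp [margTX, ← Finset.mul_sum, hg]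

lemma margTY_mul_eq_zero [Fintype X] {f : T → X → ℝ} (g : T → Y → ℝ)
    (hf : ∀ t, ∑ x, f t x = 0) : margTY (fun t x y => f t x * g t y) = 0 := by
  funext t y
  simp [margTY, ← Finset.sum_mul, hf]

lemma margXY_pos [Fintype T] [Nonempty T] {Q : T → X → Y → ℝ} (hQ : ∀ t x y, 0 < Q t x y)
    (x : X) (y : Y) : 0 < margXY Q x y :=
  Finset.sum_pos (fun t _ => hQ t x y) Finset.univ_nonempty

lemma condProb_pos [Fintype T] {Q : T → X → Y → ℝ} (hQ : ∀ t x y, 0 < Q t x y)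
    (t : T) (x : X) (y : Y) : 0 < condProb Q t x y :=
  have : Nonempty T := ⟨t⟩
  div_pos (hQ t x y) (margXY_pos hQ x y)

lemma sum_condProb [Fintype T] {Q : T → X → Y → ℝ} {x : X} {y : Y} (hm : margXY Q x y ≠ 0) :
    ∑ t, condProb Q t x y = 1 := by
  simp_rw [condProb, ← Finset.sum_div]
  exact div_self hm

lemma condProb_mul_margXY [Fintype T] {Q : T → X → Y → ℝ} {x : X} {y : Y}
    (hm : margXY Q x y ≠ 0) (t : T) : condProb Q t x y * margXY Q x y = Q t x y :=
  div_mul_cancel₀ _ hm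

lemma add_smul_mem_deltaP [Fintype T] [Fintype X] [Fintype Y] {P Q : T → X → Y → ℝ}
    (hQ : Q ∈ deltaP P) {D : T → X → Y → ℝ} (hTX : margTX D = 0) (hTY : margTY D = 0) {c : ℝ}
    (hnn : ∀ t x y, 0 ≤ (Q + c • D) t x y) : Q + c • D ∈ deltaP P := by
  have hTX' : margTX (Q + c • D) = margTX Q := by rw [margTX_add_smul, hTX, smul_zero, add_zero]
  have hTY' : margTY (Q + c • D) = margTY Q := by rw [margTY_add_smul, hTY, smul_zero, add_zero]
  refine ⟨⟨hnn, ?_⟩, fun t x => hTX' ▸ hQ.2.1 t x, fun t y => hTY' ▸ hQ.2.2 t y⟩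
  calc ∑ t, ∑ x, ∑ y, (Q + c • D) t x y = ∑ t, ∑ x, margTX (Q + c • D) t x := rfl
    _ = ∑ t, ∑ x, ∑ y, Q t x y := by rw [hTX']; rfl
    _ = 1 := hQ.1.2

lemma eventually_pos_add_smul [Finite T] [Finite X] [Finite Y] {Q : T → X → Y → ℝ}
    (hQ : ∀ t x y, 0 < Q t x y) (D : T → X → Y → ℝ) :
    ∀ᶠ c in 𝓝 (0 : ℝ), ∀ t x y, 0 < (Q + c • D) t x y := by
  simp only [eventually_all]
  intro t x y
  have hcont : Tendsto (fun c : ℝ => Q t x y + c * D t x y) (𝓝 0) (𝓝 (Q t x y)) := by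
    simpa using ((continuous_mul_const (D t x y)).const_add (Q t x y)).tendsto 0
  simpa using hcont.eventually (lt_mem_nhds (hQ t x y))

lemma hasDerivAt_mul_log_div {a b : ℝ} (ha : a ≠ 0) (hb : b ≠ 0) (c d : ℝ) :
    HasDerivAt (fun ε : ℝ => (a + ε * c) * Real.log ((a + ε * c) / (b + ε * d)))
      (c * Real.log (a / b) + c - a * d / b) 0 := by
  have hnum : HasDerivAt (fun ε : ℝ => a + ε * c) c 0 := by
    simpa using (hasDerivAt_mul_const c).const_add a
  have hden : HasDerivAt (fun ε : ℝ => b + ε * d) d 0 := by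
    simpa using (hasDerivAt_mul_const d).const_add b
  have hlog := (hnum.fun_div hden (by simpa using hb)).log (by simpa using div_ne_zero ha hb)
  refine (hnum.fun_mul hlog).congr_deriv ?_
  simp only [zero_mul, add_zero]
  field_simp
  ring

lemma hasDerivAt_condEntTXY_add_smul [Fintype T] [Fintype X] [Fintype Y] {Q : T → X → Y → ℝ}
    (hQ : ∀ t x y, 0 < Q t x y) (D : T → X → Y → ℝ) :
    HasDerivAt (fun c : ℝ => condEntTXY (Q + c • D))
      (-∑ t, ∑ x, ∑ y, D t x y * Real.log (condProb Q t x y)) 0 := by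
  have hline : (fun c : ℝ => condEntTXY (Q + c • D)) = fun c => ∑ t, ∑ x, ∑ y,
      -((Q t x y + c * D t x y) *
        Real.log ((Q t x y + c * D t x y) / (margXY Q x y + c * margXY D x y))) := by
    funext c
    simp [condEntTXY, margXY_add_smul]
  have hterm : ∀ t x y, HasDerivAt
      (fun c : ℝ => -((Q t x y + c * D t x y) *
        Real.log ((Q t x y + c * D t x y) / (margXY Q x y + c * margXY D x y))))
      (-(D t x y * Real.log (condProb Q t x y) +
        (D t x y - Q t x y * margXY D x y / margXY Q x y))) 0 := by
    intro t x y
    have : Nonempty T := ⟨t⟩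
    have := (hasDerivAt_mul_log_div (hQ t x y).ne' (margXY_pos hQ x y).ne'
      (D t x y) (margXY D x y)).neg
    rwa [add_sub_assoc] at this
  -- The first-order change of `margXY` cancels: `∑ₜ Q t x y / margXY Q x y = 1`.
  have hcancel : ∑ t, ∑ x, ∑ y, (D t x y - Q t x y * margXY D x y / margXY Q x y) = 0 := by
    rw [Finset.sum_comm]
    refine Finset.sum_eq_zero fun x _ => ?_
    rw [Finset.sum_comm]
    refine Finset.sum_eq_zero fun y _ => ?_
    rcases isEmpty_or_nonempty T with hT | hT
    · simp
    rw [Finset.sum_sub_distrib, ← Finset.sum_div, ← Finset.sum_mul]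
    change margXY D x y - margXY Q x y * margXY D x y / margXY Q x y = 0
    rw [mul_div_cancel_left₀ _ (margXY_pos hQ x y).ne', sub_self]
  rw [hline]
  refine (HasDerivAt.fun_sum fun t _ => HasDerivAt.fun_sum fun x _ =>
    HasDerivAt.fun_sum fun y _ => hterm t x y).congr_deriv ?_
  simp only [neg_add, Finset.sum_add_distrib, Finset.sum_neg_distrib, hcancel, neg_zero, add_zero]

theorem sum_mul_log_condProb_eq_zero [Fintype T] [Fintype X] [Fintype Y]
    {P Qs : T → X → Y → ℝ} (hQs : Qs ∈ deltaP P)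
    (hmax : ∀ Q ∈ deltaP P, condEntTXY Q ≤ condEntTXY Qs) (hfull : ∀ t x y, 0 < Qs t x y)
    {D : T → X → Y → ℝ} (hTX : margTX D = 0) (hTY : margTY D = 0) :
    ∑ t, ∑ x, ∑ y, D t x y * Real.log (condProb Qs t x y) = 0 := by
  have hlocal : IsLocalMax (fun c : ℝ => condEntTXY (Qs + c • D)) 0 := by
    filter_upwards [eventually_pos_add_smul hfull D] with c hc
    rw [zero_smul, add_zero]
    exact hmax _ (add_smul_mem_deltaP hQs hTX hTY fun t x y => (hc t x y).le)
  exact neg_eq_zero.mp (hlocal.hasDerivAt_eq_zero (hasDerivAt_condEntTXY_add_smul hfull D))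

lemma condEntTXY_mul_of_sum_eq_one [Fintype T] [Fintype X] [Fintype Y] {r : T → X → Y → ℝ}
    (hr : ∀ x y, ∑ t, r t x y = 1) (n : X → Y → ℝ) :
    condEntTXY (fun t x y => r t x y * n x y) =
      -∑ t, ∑ x, ∑ y, r t x y * n x y * Real.log (r t x y) := by
  have hm : margXY (fun t x y => r t x y * n x y) = n := by
    funext x y
    simp [margXY, ← Finset.sum_mul, hr]
  simp only [condEntTXY, hm, ← Finset.sum_neg_distrib]
  refine Finset.sum_congr rfl fun t _ => Finset.sum_congr rfl fun x _ =>
    Finset.sum_congr rfl fun y _ => ?_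
  rcases eq_or_ne (n x y) 0 with hn | hn
  · simp [hn]
  · rw [mul_div_cancel_right₀ _ hn]

lemma condEntTXY_add_smul_condProb_mul [Fintype T] [Fintype X] [Fintype Y]
    {Q : T → X → Y → ℝ} (hm : ∀ x y, margXY Q x y ≠ 0) (w : X → Y → ℝ) (c : ℝ) :
    condEntTXY (Q + c • fun t x y => condProb Q t x y * w x y) =
      condEntTXY Q - c * ∑ t, ∑ x, ∑ y, condProb Q t x y * w x y * Real.log (condProb Q t x y) := by
  have hsum : ∀ x y, ∑ t, condProb Q t x y = 1 := fun x y => sum_condProb (hm x y)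
  have hH : condEntTXY Q =
      -∑ t, ∑ x, ∑ y, condProb Q t x y * margXY Q x y * Real.log (condProb Q t x y) := by
    have hQ : Q = fun t x y => condProb Q t x y * margXY Q x y := by
      funext t x y
      exact (condProb_mul_margXY (hm x y) t).symm
    conv_lhs => rw [hQ]
    exact condEntTXY_mul_of_sum_eq_one hsum _
  have hQc : Q + c • (fun t x y => condProb Q t x y * w x y) =
      fun t x y => condProb Q t x y * (margXY Q x y + c * w x y) := by
    funext t x y
    rw [Pi.add_apply, Pi.add_apply, Pi.add_apply, Pi.smul_apply, Pi.smul_apply, Pi.smul_apply,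
      smul_eq_mul, ← condProb_mul_margXY (hm x y) t]
    ring
  rw [hQc, condEntTXY_mul_of_sum_eq_one hsum, hH]
  simp only [mul_add, add_mul, Finset.sum_add_distrib, Finset.mul_sum, mul_assoc, mul_left_comm c]
  ring

theorem condProb_mul_condProb_eq [Fintype T] [Fintype X] [Fintype Y]
    {P Qs : T → X → Y → ℝ} (hQs : Qs ∈ deltaP P)
    (hmax : ∀ Q ∈ deltaP P, condEntTXY Q ≤ condEntTXY Qs) (hfull : ∀ t x y, 0 < Qs t x y)
    (t : T) (x₁ x₂ : X) (y₁ y₂ : Y) :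
    condProb Qs t x₁ y₁ * condProb Qs t x₂ y₂ = condProb Qs t x₁ y₂ * condProb Qs t x₂ y₁ := by
  classical
  let f : T → X → ℝ := fun s x =>
    if s = t then (if x = x₁ then 1 else 0) - (if x = x₂ then 1 else 0) else 0
  let g : T → Y → ℝ := fun _ y => (if y = y₁ then 1 else 0) - (if y = y₂ then 1 else 0)
  have hf : ∀ s, ∑ x, f s x = 0 := by
    intro s
    by_cases hs : s = t <;> simp [f, hs, Finset.sum_sub_distrib]
  have hg : ∀ s, ∑ y, g s y = 0 := by simp [g, Finset.sum_sub_distrib]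
  have hstat := sum_mul_log_condProb_eq_zero hQs hmax hfull
    (margTX_mul_eq_zero f hg) (margTY_mul_eq_zero g hf)
  simp only [ite_mul, sub_mul, one_mul, zero_mul, Finset.sum_ite_irrel, Finset.sum_sub_distrib,
    Finset.sum_ite_eq', Finset.mem_univ, ↓reduceIte, Finset.sum_const_zero, f, g] at hstat
  have hr := condProb_pos hfull t
  rw [← Real.exp_log (mul_pos (hr x₁ y₁) (hr x₂ y₂)), ← Real.exp_log (mul_pos (hr x₁ y₂) (hr x₂ y₁)),
    Real.log_mul (hr x₁ y₁).ne' (hr x₂ y₂).ne', Real.log_mul (hr x₁ y₂).ne' (hr x₂ y₁).ne']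
  congr 1
  linarith

lemma exists_eq_mul_of_mul_eq_mul {K : Type*} [Field K] {r : X → Y → K} {x₀ : X} {y₀ : Y}
    (h₀ : r x₀ y₀ ≠ 0) (h : ∀ x₁ x₂ y₁ y₂, r x₁ y₁ * r x₂ y₂ = r x₁ y₂ * r x₂ y₁) :
    ∃ (a : X → K) (b : Y → K), ∀ x y, r x y = a x * b y := by
  refine ⟨fun x => r x y₀, fun y => r x₀ y / r x₀ y₀, fun x y => ?_⟩
  rw [mul_div_assoc', eq_div_iff h₀, ← h]

lemma exists_ne_zero_forall_sum_mul_eq_zero [Fintype T] [Fintype X] {K : Type*} [Field K]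
    (hcard : Fintype.card T < Fintype.card X) (a : T → X → K) :
    ∃ u : X → K, u ≠ 0 ∧ ∀ t, ∑ x, a t x * u x = 0 := by
  have hker : LinearMap.ker (Matrix.of a).mulVecLin ≠ ⊥ :=
    LinearMap.ker_ne_bot_of_finrank_lt (by simpa using hcard)
  obtain ⟨u, hu, hu0⟩ := (Submodule.ne_bot_iff _).mp hker
  exact ⟨u, hu0, fun t => congrFun hu t⟩

theorem nonuniqueness_cardinalities_general [Fintype T] [Fintype X] [Fintype Y]
    (hcard : Fintype.card T < min (Fintype.card X) (Fintype.card Y))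
    (P Qs : T → X → Y → ℝ)
    (hQs : Qs ∈ deltaP P) (hmax : ∀ Q ∈ deltaP P, condEntTXY Q ≤ condEntTXY Qs)
    (hfull : ∀ t x y, 0 < Qs t x y) :
    ∃ Q' ∈ deltaP P, Q' ≠ Qs ∧ ∀ Q ∈ deltaP P, condEntTXY Q ≤ condEntTXY Q' := by
  have hT : Nonempty T := Finset.univ_nonempty_iff.mp
    (Finset.nonempty_of_sum_ne_zero (by rw [hQs.1.2]; exact one_ne_zero))
  obtain ⟨x₀⟩ : Nonempty X := Fintype.card_pos_iff.mp (by omega)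
  obtain ⟨y₀⟩ : Nonempty Y := Fintype.card_pos_iff.mp (by omega)
  choose a b hab using fun t => exists_eq_mul_of_mul_eq_mul (condProb_pos hfull t x₀ y₀).ne'
    (condProb_mul_condProb_eq hQs hmax hfull t)
  obtain ⟨u, hu0, hu⟩ := exists_ne_zero_forall_sum_mul_eq_zero (hcard.trans_le (min_le_left _ _)) a
  obtain ⟨v, hv0, hv⟩ := exists_ne_zero_forall_sum_mul_eq_zero (hcard.trans_le (min_le_right _ _)) b
  let w : X → Y → ℝ := fun x y => u x * v y
  let D : T → X → Y → ℝ := fun t x y => condProb Qs t x y * w x y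
  have hD : D = fun t x y => a t x * u x * (b t y * v y) := by
    funext t x y
    simp only [D, w, hab]
    ring
  have hTX : margTX D = 0 := hD ▸ margTX_mul_eq_zero _ hv
  have hTY : margTY D = 0 := hD ▸ margTY_mul_eq_zero _ hu
  have hD0 : D ≠ 0 := fun h => by
    obtain ⟨t₀⟩ := hT
    obtain ⟨x, hx⟩ := Function.ne_iff.mp hu0
    obtain ⟨y, hy⟩ := Function.ne_iff.mp hv0
    exact mul_ne_zero (condProb_pos hfull t₀ x y).ne' (mul_ne_zero hx hy) (congrFun₃ h t₀ x y)
  obtain ⟨c, hpos, hc⟩ := (((eventually_pos_add_smul hfull D).filter_mono nhdsWithin_le_nhds).and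
    self_mem_nhdsWithin).exists (f := 𝓝[≠] (0 : ℝ))
  refine ⟨Qs + c • D, add_smul_mem_deltaP hQs hTX hTY fun t x y => (hpos t x y).le,
    by simpa [hD0] using hc, fun Q hQ => ?_⟩
  rw [condEntTXY_add_smul_condProb_mul (fun x y => (margXY_pos hfull x y).ne'),
    sum_mul_log_condProb_eq_zero hQs hmax hfull hTX hTY, mul_zero, sub_zero]
  exact hmax Q hQ

/-- Suppose `|𝒯| < min{|𝒳|,|𝒴|}`.  If there is a maximizer of `H_Q(T|X,Y)` over
`Δ_P` with full support, then the maximizer is not unique. -/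
theorem nonuniqueness_cardinalities [Fintype T] [Fintype X] [Fintype Y]
    (hcard : Fintype.card T < min (Fintype.card X) (Fintype.card Y))
    (P Qs : T → X → Y → ℝ) (hP : IsDist P)
    (hQs : Qs ∈ deltaP P) (hmax : ∀ Q ∈ deltaP P, condEntTXY Q ≤ condEntTXY Qs)
    (hfull : ∀ t x y, 0 < Qs t x y) :
    ∃ Q' ∈ deltaP P, Q' ≠ Qs ∧ ∀ Q ∈ deltaP P, condEntTXY Q ≤ condEntTXY Q' :=
  nonuniqueness_cardinalities_general hcard P Qs hQs hmax hfull
end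
end

section
/- Let T, X, Y be binary with parameters a ∈ (0,1), b = c ∈ (0,1), d = e ∈ (0,1). Then for every g with −min{bd, (1−b)(1−d)} ≤ g ≤ min{b(1−d), (1−b)d}, the distribution Q_g given by Q_g(t,x,y) = P(t)·(P(x|t)P(y|t) + s(x,y)·g), where s(0,0) = s(1,1) = 1 and s(0,1) = s(1,0) = −1, belongs to Δ_P and satisfies I_{Q_g}(T:X|Y) = 0; hence the minimizer of I_Q(T:X|Y) on Δ_P is not unique. -/
/-!
Each `Q_g` has the form `P_T ⊗ R_g`, where `R_g` is a coupling of the `X`- and `Y`-marginals of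
`P`: hence `Q_g ∈ Δ_P`, and `T` is independent of `(X, Y)` under `Q_g`, so `I_{Q_g}(T:X|Y) = 0`.
Conditional mutual information is nonnegative on distributions (Gibbs' inequality, from
`log r ≥ 1 - 1/r`), so every `Q_g` is a minimizer, and the admissible `g` form a nondegenerate
interval.
-/

open scoped BigOperators
noncomputable section

variable {T X Y : Type*}

lemma sub_le_mul_log_div {p q : ℝ} (hp : 0 ≤ p) (hq : 0 ≤ q) (hpq : q = 0 → p = 0) :
    p - q ≤ p * Real.log (p / q) := by
  rcases hp.eq_or_lt with rfl | hp
  · simpa using hq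
  have hq : 0 < q := hq.lt_of_ne fun h => hp.ne' (hpq h.symm)
  have hlog := Real.one_sub_inv_le_log_of_pos (div_pos hp hq)
  calc p - q = p * (1 - (p / q)⁻¹) := by field_simp
    _ ≤ p * Real.log (p / q) := mul_le_mul_of_nonneg_left hlog hp.le

section
variable [Fintype T] [Fintype X] [Fintype Y]

lemma sum_margY_eq_one {Q : T → X → Y → ℝ} (hQ : IsDist Q) : ∑ y, margY Q y = 1 := by
  calc ∑ y, margY Q y = ∑ t, ∑ y, ∑ x, Q t x y := Finset.sum_comm
    _ = ∑ t, ∑ x, ∑ y, Q t x y := Finset.sum_congr rfl fun _ _ => Finset.sum_comm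
    _ = 1 := hQ.2

lemma sum_margTY_mul_margXY_div_margY_le_one {Q : T → X → Y → ℝ} (hQ : IsDist Q) :
    ∑ t, ∑ x, ∑ y, margTY Q t y * margXY Q x y / margY Q y ≤ 1 := by
  have hslice : ∀ y, ∑ t, ∑ x, margTY Q t y * margXY Q x y / margY Q y ≤ margY Q y := by
    intro y
    have hTY : ∑ t, margTY Q t y = margY Q y := rfl
    have hXY : ∑ x, margXY Q x y = margY Q y := Finset.sum_comm
    calc ∑ t, ∑ x, margTY Q t y * margXY Q x y / margY Q y
        = (∑ t, margTY Q t y) * (∑ x, margXY Q x y) / margY Q y := by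
          simp only [Finset.sum_mul_sum, Finset.sum_div]
      _ = margY Q y * margY Q y / margY Q y := by rw [hTY, hXY]
      _ ≤ margY Q y := by
          rcases eq_or_ne (margY Q y) 0 with h | h
          · simp [h]
          · rw [mul_div_cancel_right₀ _ h]
  calc ∑ t, ∑ x, ∑ y, margTY Q t y * margXY Q x y / margY Q y
      = ∑ y, ∑ t, ∑ x, margTY Q t y * margXY Q x y / margY Q y :=
        (Finset.sum_congr rfl fun _ _ => Finset.sum_comm).trans Finset.sum_comm
    _ ≤ ∑ y, margY Q y := Finset.sum_le_sum fun y _ => hslice y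
    _ = 1 := sum_margY_eq_one hQ

theorem CMI_nonneg {Q : T → X → Y → ℝ} (hQ : IsDist Q) : 0 ≤ CMI Q := by
  obtain ⟨hQ0, hQ1⟩ := hQ
  have hTY : ∀ t x y, Q t x y ≤ margTY Q t y := fun t x y =>
    Finset.single_le_sum (fun x _ => hQ0 t x y) (Finset.mem_univ x)
  have hXY : ∀ t x y, Q t x y ≤ margXY Q x y := fun t x y =>
    Finset.single_le_sum (fun t _ => hQ0 t x y) (Finset.mem_univ t)
  have hY : ∀ t y, margTY Q t y ≤ margY Q y := fun t y =>
    Finset.single_le_sum (fun t _ => Finset.sum_nonneg fun x _ => hQ0 t x y) (Finset.mem_univ t)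
  have hterm : ∀ t x y, Q t x y - margTY Q t y * margXY Q x y / margY Q y ≤
      Q t x y * Real.log (Q t x y * margY Q y / (margTY Q t y * margXY Q x y)) := by
    intro t x y
    rw [← div_div_eq_mul_div (Q t x y)]
    refine sub_le_mul_log_div (hQ0 t x y) ?_ fun h => ?_
    · have hTY0 := (hQ0 t x y).trans (hTY t x y)
      exact div_nonneg (mul_nonneg hTY0 ((hQ0 t x y).trans (hXY t x y))) (hTY0.trans (hY t y))
    · by_contra hne
      have hpos := (hQ0 t x y).lt_of_ne' hne
      have : 0 < margTY Q t y * margXY Q x y / margY Q y :=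
        div_pos (mul_pos (hpos.trans_le (hTY t x y)) (hpos.trans_le (hXY t x y)))
          (hpos.trans_le ((hTY t x y).trans (hY t y)))
      exact this.ne' h
  calc (0 : ℝ) ≤ ∑ t, ∑ x, ∑ y, (Q t x y - margTY Q t y * margXY Q x y / margY Q y) := by
        simp only [Finset.sum_sub_distrib, hQ1]
        linarith [sum_margTY_mul_margXY_div_margY_le_one (Q := Q) ⟨hQ0, hQ1⟩]
    _ ≤ CMI Q := Finset.sum_le_sum fun t _ => Finset.sum_le_sum fun x _ =>
        Finset.sum_le_sum fun y _ => hterm t x y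

theorem CMI_mul_left_eq_zero {p : T → ℝ} (hp : ∑ t, p t = 1) (R : X → Y → ℝ) :
    CMI (fun t x y => p t * R x y) = 0 := by
  have hY : ∀ y, margY (fun t x y => p t * R x y) y = ∑ x, R x y := fun y => by
    simp only [margY, ← Finset.mul_sum, ← Finset.sum_mul, hp, one_mul]
  have hTY : ∀ t y, margTY (fun t x y => p t * R x y) t y = p t * ∑ x, R x y := fun t y =>
    (Finset.mul_sum _ _ _).symm
  have hXY : ∀ x y, margXY (fun t x y => p t * R x y) x y = R x y := fun x y => by
    simp only [margXY, ← Finset.sum_mul, hp, one_mul]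
  refine Finset.sum_eq_zero fun t _ => Finset.sum_eq_zero fun x _ =>
    Finset.sum_eq_zero fun y _ => ?_
  dsimp only
  rw [hY, hTY, hXY, show p t * (∑ x, R x y) * R x y = p t * R x y * ∑ x, R x y by ring]
  -- `u / u` is `1`, or `0` when `u = 0`; its logarithm vanishes either way.
  rcases eq_or_ne (p t * R x y * ∑ x, R x y) 0 with h | h <;> simp [h]

lemma mul_left_mem_deltaP {p : T → ℝ} (hp0 : ∀ t, 0 ≤ p t) (hp1 : ∑ t, p t = 1)
    {R R' : X → Y → ℝ} (hR0 : ∀ x y, 0 ≤ R x y) (hR1 : ∑ x, ∑ y, R x y = 1)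
    (hRX : ∀ x, ∑ y, R x y = ∑ y, R' x y) (hRY : ∀ y, ∑ x, R x y = ∑ x, R' x y) :
    (fun t x y => p t * R x y) ∈ deltaP (fun t x y => p t * R' x y) := by
  refine ⟨⟨fun t x y => mul_nonneg (hp0 t) (hR0 x y), ?_⟩, fun t x => ?_, fun t y => ?_⟩
  · simp only [← Finset.mul_sum, hR1, hp1, mul_one]
  · simp only [margTX, ← Finset.mul_sum, hRX]
  · simp only [margTY, ← Finset.mul_sum, hRY]

end

def binDist (p : ℝ) (i : Fin 2) : ℝ := if i = 0 then p else 1 - p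

def diagSign (x y : Fin 2) : ℝ := (if x = 0 then 1 else -1) * (if y = 0 then 1 else -1)

/-- The couplings of `binDist b` and `binDist d` form the segment through the product coupling
in the direction `diagSign`, whose row and column sums vanish. -/
def diagonalCoupling (b d g : ℝ) (x y : Fin 2) : ℝ :=
  binDist b x * binDist d y + diagSign x y * g

section diagonalCoupling
variable {a b d g : ℝ}

lemma binDist_nonneg (ha0 : 0 ≤ a) (ha1 : a ≤ 1) (i : Fin 2) : 0 ≤ binDist a i := by
  unfold binDist; split <;> linarith

lemma sum_binDist (a : ℝ) : ∑ i, binDist a i = 1 := by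
  simp [binDist, Fin.sum_univ_two]

lemma sum_diagonalCoupling_right (b d g : ℝ) (x : Fin 2) :
    ∑ y, diagonalCoupling b d g x y = binDist b x := by
  fin_cases x <;> simp [diagonalCoupling, diagSign, binDist, Fin.sum_univ_two] <;> ring

lemma sum_diagonalCoupling_left (b d g : ℝ) (y : Fin 2) :
    ∑ x, diagonalCoupling b d g x y = binDist d y := by
  fin_cases y <;> simp [diagonalCoupling, diagSign, binDist, Fin.sum_univ_two] <;> ring

lemma sum_sum_diagonalCoupling (b d g : ℝ) : ∑ x, ∑ y, diagonalCoupling b d g x y = 1 := by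
  simp only [sum_diagonalCoupling_right, sum_binDist]

lemma diagonalCoupling_nonneg (hlo : -min (b * d) ((1 - b) * (1 - d)) ≤ g)
    (hhi : g ≤ min (b * (1 - d)) ((1 - b) * d)) (x y : Fin 2) :
    0 ≤ diagonalCoupling b d g x y := by
  have := min_le_left (b * d) ((1 - b) * (1 - d))
  have := min_le_right (b * d) ((1 - b) * (1 - d))
  have := min_le_left (b * (1 - d)) ((1 - b) * d)
  have := min_le_right (b * (1 - d)) ((1 - b) * d)
  fin_cases x <;> fin_cases y <;> simp [diagonalCoupling, diagSign, binDist] <;> linarith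

lemma diagonalCoupling_injective (b d : ℝ) : Function.Injective (diagonalCoupling b d) := by
  intro g g' h
  simpa [diagonalCoupling, diagSign] using congrFun (congrFun h 0) 0

lemma diagonalCoupling_mem_deltaP (ha0 : 0 ≤ a) (ha1 : a ≤ 1)
    (hlo : -min (b * d) ((1 - b) * (1 - d)) ≤ g) (hhi : g ≤ min (b * (1 - d)) ((1 - b) * d)) :
    (fun t x y => binDist a t * diagonalCoupling b d g x y) ∈
      deltaP (fun t x y => binDist a t * (binDist b x * binDist d y)) :=
  mul_left_mem_deltaP (binDist_nonneg ha0 ha1) (sum_binDist a) (diagonalCoupling_nonneg hlo hhi)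
    (sum_sum_diagonalCoupling b d g)
    (fun x => by rw [sum_diagonalCoupling_right, ← Finset.mul_sum, sum_binDist, mul_one])
    (fun y => by rw [sum_diagonalCoupling_left, ← Finset.sum_mul, sum_binDist, one_mul])

end diagonalCoupling

/-- All-binary case with `b = c` and `d = e` (so `T ⊥ X` and `T ⊥ Y`), with
`P(t,x,y) = P(t) P(x) P(y)`: for every `g` with
`−min{bd,(1−b)(1−d)} ≤ g ≤ min{b(1−d),(1−b)d}`, the distribution
`Q_g(t,x,y) = P(t)(P(x)P(y) + s(x,y) g)` (with sign pattern `s(0,0)=s(1,1)=1`,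
`s(0,1)=s(1,0)=−1`) belongs to `Δ_P` and satisfies `I_{Q_g}(T:X|Y) = 0`; hence the
minimizer of `I_Q(T:X|Y)` on `Δ_P` is not unique. -/
theorem all_binary_diagonal_nonunique
    (a b d : ℝ) (ha : a ∈ Set.Ioo (0:ℝ) 1) (hb : b ∈ Set.Ioo (0:ℝ) 1)
    (hd : d ∈ Set.Ioo (0:ℝ) 1)
    (P : Fin 2 → Fin 2 → Fin 2 → ℝ)
    (hPdef : P = fun (t x y : Fin 2) => (if t = 0 then a else 1 - a) *
      ((if x = 0 then b else 1 - b) * (if y = 0 then d else 1 - d))) :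
    (∀ g : ℝ, -min (b * d) ((1 - b) * (1 - d)) ≤ g →
      g ≤ min (b * (1 - d)) ((1 - b) * d) →
      (fun (t x y : Fin 2) => (if t = 0 then a else 1 - a) *
          ((if x = 0 then b else 1 - b) * (if y = 0 then d else 1 - d) +
            ((if x = 0 then (1:ℝ) else -1) * (if y = 0 then (1:ℝ) else -1)) * g))
        ∈ deltaP P ∧
      CMI (fun (t x y : Fin 2) => (if t = 0 then a else 1 - a) *
          ((if x = 0 then b else 1 - b) * (if y = 0 then d else 1 - d) +
            ((if x = 0 then (1:ℝ) else -1) * (if y = 0 then (1:ℝ) else -1)) * g))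
        = 0) ∧
    ∃ Q1 Q2 : Fin 2 → Fin 2 → Fin 2 → ℝ, Q1 ∈ deltaP P ∧ Q2 ∈ deltaP P ∧ Q1 ≠ Q2 ∧
      (∀ Q ∈ deltaP P, CMI Q1 ≤ CMI Q) ∧ (∀ Q ∈ deltaP P, CMI Q2 ≤ CMI Q) := by
  obtain ⟨ha0, ha1⟩ := ha
  obtain ⟨hb0, hb1⟩ := hb
  obtain ⟨hd0, hd1⟩ := hd
  subst hPdef
  have hQ : ∀ g, -min (b * d) ((1 - b) * (1 - d)) ≤ g →
      g ≤ min (b * (1 - d)) ((1 - b) * d) →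
      (fun t x y => binDist a t * diagonalCoupling b d g x y) ∈
        deltaP (fun t x y => binDist a t * (binDist b x * binDist d y)) ∧
      CMI (fun t x y => binDist a t * diagonalCoupling b d g x y) = 0 := fun g hlo hhi =>
    ⟨diagonalCoupling_mem_deltaP ha0.le ha1.le hlo hhi, CMI_mul_left_eq_zero (sum_binDist a) _⟩
  set gmax := min (b * (1 - d)) ((1 - b) * d)
  have hlo : -min (b * d) ((1 - b) * (1 - d)) ≤ 0 :=
    neg_nonpos.2 (le_min (by positivity) (mul_nonneg (by linarith) (by linarith)))
  have hgmax : 0 < gmax := lt_min (mul_pos hb0 (by linarith)) (mul_pos (by linarith) hd0)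
  obtain ⟨hmem₀, hCMI₀⟩ := hQ 0 hlo hgmax.le
  obtain ⟨hmem₁, hCMI₁⟩ := hQ gmax (hlo.trans hgmax.le) le_rfl
  refine ⟨hQ, _, _, hmem₀, hmem₁, fun h => hgmax.ne ?_,
    fun Q hQmem => hCMI₀.trans_le (CMI_nonneg hQmem.1),
    fun Q hQmem => hCMI₁.trans_le (CMI_nonneg hQmem.1)⟩
  refine diagonalCoupling_injective b d (funext fun x => funext fun y => ?_)
  simpa [binDist, ha0.ne'] using congrFun (congrFun (congrFun h 0) x) y
end
end

section
/- In the all-binary case, Δ_P is a singleton if and only if one of the following holds: (a) H(X|T) = 0; (b) H(Y|T) = 0; (c) H(X|T=0) = 0 and H(Y|T=1) = 0; (d) H(X|T=1) = 0 and H(Y|T=0) = 0. -/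
open scoped BigOperators
noncomputable section

variable {T X Y : Type*}

/-- The conditional entropy `H(X|T)` of a joint distribution of binary `T,X,Y`. -/
def HXgT (P : Fin 2 → Fin 2 → Fin 2 → ℝ) : ℝ :=
  ∑ t, ∑ x, -(margTX P t x * Real.log (margTX P t x / margT P t))

/-- The conditional entropy `H(Y|T)`. -/
def HYgT (P : Fin 2 → Fin 2 → Fin 2 → ℝ) : ℝ :=
  ∑ t, ∑ y, -(margTY P t y * Real.log (margTY P t y / margT P t))

/-- The conditional entropy `H(X|T=t)`. -/
def HXt (P : Fin 2 → Fin 2 → Fin 2 → ℝ) (t : Fin 2) : ℝ :=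
  ∑ x, -((margTX P t x / margT P t) * Real.log (margTX P t x / margT P t))

/-- The conditional entropy `H(Y|T=t)`. -/
def HYt (P : Fin 2 → Fin 2 → Fin 2 → ℝ) (t : Fin 2) : ℝ :=
  ∑ y, -((margTY P t y / margT P t) * Real.log (margTY P t y / margT P t))

set_option maxHeartbeats 1000000

private lemma nml_nonneg {p : ℝ} (h0 : 0 ≤ p) (h1 : p ≤ 1) : 0 ≤ -(p * Real.log p) := by
  have := Real.log_nonpos h0 h1
  nlinarith

private lemma nml_zero {p : ℝ} (h0 : 0 ≤ p) (h1 : p ≤ 1) :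
    -(p * Real.log p) = 0 ↔ p = 0 ∨ p = 1 := by
  constructor
  · intro h
    rcases eq_or_lt_of_le h0 with he | hp
    · exact Or.inl he.symm
    · right
      have hz : p * Real.log p = 0 := by linarith
      rcases mul_eq_zero.mp hz with h' | h'
      · exact absurd h' hp.ne'
      · rcases Real.log_eq_zero.mp h' with h | h | h
        · exact absurd h hp.ne'
        · exact h
        · linarith
  · rintro (rfl | rfl) <;> simp

private lemma two_term_ent (q0 q1 m : ℝ) (hq0 : 0 ≤ q0) (hq1 : 0 ≤ q1) (hm : 0 < m)
    (hsum : q0 + q1 = m) :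
    (0 ≤ -((q0/m) * Real.log (q0/m)) + -((q1/m) * Real.log (q1/m))) ∧
    ((-((q0/m) * Real.log (q0/m)) + -((q1/m) * Real.log (q1/m)) = 0) ↔ (q0 = 0 ∨ q1 = 0)) := by
  have hp0 : 0 ≤ q0 / m := div_nonneg hq0 hm.le
  have hp1 : 0 ≤ q1 / m := div_nonneg hq1 hm.le
  have hp0' : q0 / m ≤ 1 := (div_le_one hm).mpr (by linarith)
  have hp1' : q1 / m ≤ 1 := (div_le_one hm).mpr (by linarith)
  have n0 := nml_nonneg hp0 hp0'
  have n1 := nml_nonneg hp1 hp1'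
  refine ⟨by linarith, ?_⟩
  constructor
  · intro h
    have e0 : -((q0/m) * Real.log (q0/m)) = 0 := by linarith
    rcases (nml_zero hp0 hp0').mp e0 with h' | h'
    · left
      rcases div_eq_zero_iff.mp h' with h'' | h''
      · exact h''
      · exact absurd h'' hm.ne'
    · right
      have : q0 = m := by
        field_simp at h'
        linarith [h']
      linarith
  · rintro (rfl | rfl)
    · have h1 : q1 = m := by linarith
      subst h1
      simp [div_self hm.ne']
    · have h1 : q0 = m := by linarith
      subst h1
      simp [div_self hm.ne']

private lemma table_eq (a b c d a' b' c' d' : ℝ)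
    (ha : 0 ≤ a) (hb : 0 ≤ b) (hc : 0 ≤ c) (hd : 0 ≤ d)
    (ha' : 0 ≤ a') (hb' : 0 ≤ b') (hc' : 0 ≤ c') (hd' : 0 ≤ d')
    (hr0 : a + b = a' + b') (hr1 : c + d = c' + d')
    (hc0 : a + c = a' + c') (hc1 : b + d = b' + d')
    (hdet : a' + b' = 0 ∨ c' + d' = 0 ∨ a' + c' = 0 ∨ b' + d' = 0) :
    a = a' ∧ b = b' ∧ c = c' ∧ d = d' := by
  rcases hdet with h | h | h | h <;>
    exact ⟨by linarith, by linarith, by linarith, by linarith⟩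

private lemma exists_eps (a b c d : ℝ)
    (ha : 0 ≤ a) (hb : 0 ≤ b) (hc : 0 ≤ c) (hd : 0 ≤ d)
    (h1 : 0 < a + b) (h2 : 0 < c + d) (h3 : 0 < a + c) (h4 : 0 < b + d) :
    ∃ ε : ℝ, ε ≠ 0 ∧ 0 ≤ a + ε ∧ 0 ≤ b - ε ∧ 0 ≤ c - ε ∧ 0 ≤ d + ε := by
  by_cases hbc : 0 < b ∧ 0 < c
  · refine ⟨min b c, (lt_min hbc.1 hbc.2).ne', ?_, ?_, ?_, ?_⟩ <;>
      · have := min_le_left b c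
        have := min_le_right b c
        have := lt_min hbc.1 hbc.2
        linarith
  · have hbc' : b = 0 ∨ c = 0 := by
      rcases not_and_or.mp hbc with h | h
      · exact Or.inl (le_antisymm (not_lt.mp h) hb)
      · exact Or.inr (le_antisymm (not_lt.mp h) hc)
    have had : 0 < a ∧ 0 < d := by
      rcases hbc' with h | h <;> constructor <;> linarith
    refine ⟨-(min a d), ?_, ?_, ?_, ?_, ?_⟩
    · simpa using (lt_min had.1 had.2).ne'
    all_goals
      have := min_le_left a d
      have := min_le_right a d
      have := lt_min had.1 had.2
      linarith

/-- In the all-binary case (with both values of `T` of positive probability), `Δ_P` is a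
singleton if and only if (a) `H(X|T) = 0`, or (b) `H(Y|T) = 0`, or (c) `H(X|T=0) = 0`
and `H(Y|T=1) = 0`, or (d) `H(X|T=1) = 0` and `H(Y|T=0) = 0`. -/
theorem all_binary_deltaP_singleton_iff
    (P : Fin 2 → Fin 2 → Fin 2 → ℝ) (hP : IsDist P)
    (hT : ∀ t, 0 < margT P t) :
    (∃ Q, deltaP P = {Q}) ↔
      HXgT P = 0 ∨ HYgT P = 0 ∨ (HXt P 0 = 0 ∧ HYt P 1 = 0) ∨
        (HXt P 1 = 0 ∧ HYt P 0 = 0) := by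
  have hPn := hP.1
  have mTX : ∀ (R : Fin 2 → Fin 2 → Fin 2 → ℝ) t x, margTX R t x = R t x 0 + R t x 1 := by
    intro R t x; simp [margTX, Fin.sum_univ_two]
  have mTY : ∀ (R : Fin 2 → Fin 2 → Fin 2 → ℝ) t y, margTY R t y = R t 0 y + R t 1 y := by
    intro R t y; simp [margTY, Fin.sum_univ_two]
  have mT : ∀ t, margTX P t 0 + margTX P t 1 = margT P t := by
    intro t; simp [margT, margTX, Fin.sum_univ_two]
  have mT' : ∀ t, margTY P t 0 + margTY P t 1 = margT P t := by
    intro t; simp [margT, margTY, Fin.sum_univ_two]; ring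
  have hTXn : ∀ t x, 0 ≤ margTX P t x := by
    intro t x; rw [mTX]; exact add_nonneg (hPn t x 0) (hPn t x 1)
  have hTYn : ∀ t y, 0 ≤ margTY P t y := by
    intro t y; rw [mTY]; exact add_nonneg (hPn t 0 y) (hPn t 1 y)
  -- entropy characterizations
  have hXtC : ∀ t, (HXt P t = 0 ↔ (margTX P t 0 = 0 ∨ margTX P t 1 = 0)) := by
    intro t
    have h := two_term_ent (margTX P t 0) (margTX P t 1) (margT P t)
      (hTXn t 0) (hTXn t 1) (hT t) (mT t)
    unfold HXt
    rw [Fin.sum_univ_two]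
    exact h.2
  have hYtC : ∀ t, (HYt P t = 0 ↔ (margTY P t 0 = 0 ∨ margTY P t 1 = 0)) := by
    intro t
    have h := two_term_ent (margTY P t 0) (margTY P t 1) (margT P t)
      (hTYn t 0) (hTYn t 1) (hT t) (mT' t)
    unfold HYt
    rw [Fin.sum_univ_two]
    exact h.2
  have hXtN : ∀ t, 0 ≤ HXt P t := by
    intro t
    have h := two_term_ent (margTX P t 0) (margTX P t 1) (margT P t)
      (hTXn t 0) (hTXn t 1) (hT t) (mT t)
    unfold HXt
    rw [Fin.sum_univ_two]
    exact h.1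
  have hYtN : ∀ t, 0 ≤ HYt P t := by
    intro t
    have h := two_term_ent (margTY P t 0) (margTY P t 1) (margT P t)
      (hTYn t 0) (hTYn t 1) (hT t) (mT' t)
    unfold HYt
    rw [Fin.sum_univ_two]
    exact h.1
  have hXsplit : HXgT P = margT P 0 * HXt P 0 + margT P 1 * HXt P 1 := by
    have e : ∀ t x, -(margTX P t x * Real.log (margTX P t x / margT P t)) =
        margT P t * -((margTX P t x / margT P t) * Real.log (margTX P t x / margT P t)) := by
      intro t x
      have hm : margT P t * (margTX P t x / margT P t) = margTX P t x := by
        rw [← mul_div_assoc]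
        exact mul_div_cancel_left₀ _ (hT t).ne'
      rw [mul_neg, ← mul_assoc, hm]
    simp only [HXgT, HXt, Fin.sum_univ_two, e]
    ring
  have hYsplit : HYgT P = margT P 0 * HYt P 0 + margT P 1 * HYt P 1 := by
    have e : ∀ t y, -(margTY P t y * Real.log (margTY P t y / margT P t)) =
        margT P t * -((margTY P t y / margT P t) * Real.log (margTY P t y / margT P t)) := by
      intro t y
      have hm : margT P t * (margTY P t y / margT P t) = margTY P t y := by
        rw [← mul_div_assoc]
        exact mul_div_cancel_left₀ _ (hT t).ne'
      rw [mul_neg, ← mul_assoc, hm]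
    simp only [HYgT, HYt, Fin.sum_univ_two, e]
    ring
  have hXgC : HXgT P = 0 ↔ (HXt P 0 = 0 ∧ HXt P 1 = 0) := by
    rw [hXsplit]
    constructor
    · intro h
      have p0 : 0 ≤ margT P 0 * HXt P 0 := mul_nonneg (hT 0).le (hXtN 0)
      have p1 : 0 ≤ margT P 1 * HXt P 1 := mul_nonneg (hT 1).le (hXtN 1)
      have e0 : margT P 0 * HXt P 0 = 0 := by linarith
      have e1 : margT P 1 * HXt P 1 = 0 := by linarith
      constructor
      · rcases mul_eq_zero.mp e0 with h' | h'
        · exact absurd h' (hT 0).ne'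
        · exact h'
      · rcases mul_eq_zero.mp e1 with h' | h'
        · exact absurd h' (hT 1).ne'
        · exact h'
    · rintro ⟨h0, h1⟩; rw [h0, h1]; ring
  have hYgC : HYgT P = 0 ↔ (HYt P 0 = 0 ∧ HYt P 1 = 0) := by
    rw [hYsplit]
    constructor
    · intro h
      have p0 : 0 ≤ margT P 0 * HYt P 0 := mul_nonneg (hT 0).le (hYtN 0)
      have p1 : 0 ≤ margT P 1 * HYt P 1 := mul_nonneg (hT 1).le (hYtN 1)
      have e0 : margT P 0 * HYt P 0 = 0 := by linarith
      have e1 : margT P 1 * HYt P 1 = 0 := by linarith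
      constructor
      · rcases mul_eq_zero.mp e0 with h' | h'
        · exact absurd h' (hT 0).ne'
        · exact h'
      · rcases mul_eq_zero.mp e1 with h' | h'
        · exact absurd h' (hT 1).ne'
        · exact h'
    · rintro ⟨h0, h1⟩; rw [h0, h1]; ring
  have hsing : (∃ Q, deltaP P = {Q}) ↔
      (∀ t, (margTX P t 0 = 0 ∨ margTX P t 1 = 0) ∨
        (margTY P t 0 = 0 ∨ margTY P t 1 = 0)) := by
    constructor
    · rintro ⟨Q', hQ'⟩ t
      by_contra hcon
      push_neg at hcon
      obtain ⟨⟨hx0, hx1⟩, hy0, hy1⟩ := hcon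
      have hPmem : P ∈ deltaP P := ⟨hP, fun _ _ => rfl, fun _ _ => rfl⟩
      have hPP : deltaP P = {P} := by
        rw [hQ'] at hPmem ⊢
        rw [Set.mem_singleton_iff] at hPmem
        rw [hPmem]
      obtain ⟨ε, hε, e1, e2, e3, e4⟩ := exists_eps (P t 0 0) (P t 0 1) (P t 1 0) (P t 1 1)
        (hPn t 0 0) (hPn t 0 1) (hPn t 1 0) (hPn t 1 1)
        (by rw [← mTX]; exact lt_of_le_of_ne (hTXn t 0) (Ne.symm hx0))
        (by rw [← mTX]; exact lt_of_le_of_ne (hTXn t 1) (Ne.symm hx1))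
        (by rw [← mTY]; exact lt_of_le_of_ne (hTYn t 0) (Ne.symm hy0))
        (by rw [← mTY]; exact lt_of_le_of_ne (hTYn t 1) (Ne.symm hy1))
      set Q : Fin 2 → Fin 2 → Fin 2 → ℝ :=
        fun s x y => P s x y + (if s = t then ε * (if x = y then 1 else -1) else 0) with hQdef
      have hQTX : ∀ s x, margTX Q s x = margTX P s x := by
        intro s x
        rw [mTX, mTX]
        by_cases hs : s = t
        · subst hs
          fin_cases x <;> simp [hQdef] <;> ring
        · simp [hQdef, hs]
      have hQTY : ∀ s y, margTY Q s y = margTY P s y := by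
        intro s y
        rw [mTY, mTY]
        by_cases hs : s = t
        · subst hs
          fin_cases y <;> simp [hQdef] <;> ring
        · simp [hQdef, hs]
      have hQmem : Q ∈ deltaP P := by
        refine ⟨⟨?_, ?_⟩, hQTX, hQTY⟩
        · intro s x y
          by_cases hs : s = t
          · subst hs
            fin_cases x <;> fin_cases y <;> simp [hQdef] <;> linarith
          · simp [hQdef, hs]
            exact hPn s x y
        · have : ∀ s x, (∑ y, Q s x y) = ∑ y, P s x y := by
            intro s x
            exact hQTX s x
          simp only [this]
          exact hP.2
      rw [hPP, Set.mem_singleton_iff] at hQmem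
      have := congrFun (congrFun (congrFun hQmem t) 0) 0
      simp [hQdef] at this
      exact hε this
    · intro hD
      refine ⟨P, ?_⟩
      ext Q
      simp only [Set.mem_singleton_iff]
      constructor
      · rintro ⟨⟨hQn, hQs⟩, hQX, hQY⟩
        have key : ∀ t, Q t 0 0 = P t 0 0 ∧ Q t 0 1 = P t 0 1 ∧
            Q t 1 0 = P t 1 0 ∧ Q t 1 1 = P t 1 1 := by
          intro t
          refine table_eq _ _ _ _ _ _ _ _
            (hQn t 0 0) (hQn t 0 1) (hQn t 1 0) (hQn t 1 1)
            (hPn t 0 0) (hPn t 0 1) (hPn t 1 0) (hPn t 1 1)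
            ?_ ?_ ?_ ?_ ?_
          · have := hQX t 0; rw [mTX, mTX] at this; exact this
          · have := hQX t 1; rw [mTX, mTX] at this; exact this
          · have := hQY t 0; rw [mTY, mTY] at this; exact this
          · have := hQY t 1; rw [mTY, mTY] at this; exact this
          · rcases hD t with (h | h) | (h | h)
            · exact Or.inl (by rw [← mTX]; exact h)
            · exact Or.inr (Or.inl (by rw [← mTX]; exact h))
            · exact Or.inr (Or.inr (Or.inl (by rw [← mTY]; exact h)))
            · exact Or.inr (Or.inr (Or.inr (by rw [← mTY]; exact h)))
        funext t x y
        obtain ⟨k1, k2, k3, k4⟩ := key t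
        fin_cases x <;> fin_cases y <;> assumption
      · rintro rfl
        exact ⟨hP, fun _ _ => rfl, fun _ _ => rfl⟩
  rw [hsing, Fin.forall_fin_two, hXgC, hYgC, ← hXtC 0, ← hXtC 1, ← hYtC 0, ← hYtC 1]
  constructor
  · rintro ⟨h0, h1⟩
    rcases h0 with x0 | y0 <;> rcases h1 with x1 | y1
    · exact Or.inl ⟨x0, x1⟩
    · exact Or.inr (Or.inr (Or.inl ⟨x0, y1⟩))
    · exact Or.inr (Or.inr (Or.inr ⟨x1, y0⟩))
    · exact Or.inr (Or.inl ⟨y0, y1⟩)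
  · rintro (⟨x0, x1⟩ | ⟨y0, y1⟩ | ⟨x0, y1⟩ | ⟨x1, y0⟩)
    · exact ⟨Or.inl x0, Or.inl x1⟩
    · exact ⟨Or.inr y0, Or.inr y1⟩
    · exact ⟨Or.inl x0, Or.inr y1⟩
    · exact ⟨Or.inr y0, Or.inl x1⟩
end
end
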